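/- arXiv:1904.06745 — 8 statements merged into one kernel-verified Lean document; each statement's English description precedes it below -/
import Mathlib

section
/- (Hypercube Continuity Lemma) For every real constant C1 > 0 and every real ξ with 0 < ξ ≤ 1, there exists N such that for all integers n ≥ N the following holds: for all integers l1, l2 with n/2 − √(C1·n·ln n) ≤ l1 ≤ l2 ≤ n/2 + √(C1·n·ln n), if l2 − l1 ≤ (1/(10·√C1))·ξ·√(n/ln n), then 1 − ξ ≤ binom(n, l1)/binom(n, l2) ≤ 1 + ξ. -/
/-!
On the window `|l - n/2| ≤ D` with `D = √(C1 n log n)`, the consecutive ratios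
`C(n,l+1) / C(n,l) = (n-l)/(l+1)` are quotients of two numbers in `[n/2 - D, n/2 + D]`, so
`l ↦ log C(n,l)` moves by at most `log ((n/2 + D)/(n/2 - D)) ≤ 5D/n` per step once `D ≤ n/10`
(true for large `n` because `log n = o(n)`). Over a gap `k` with `k D ≤ ξ n / 10` the log of
the ratio is at most `ξ/2` in absolute value, and `|exp t - 1| ≤ 2|t|` concludes.
-/

open Real Filter Finset

lemma log_sub_log_le_log_div_of_mem_Icc {c D x y : ℝ} (hD : D < c)
    (hx : x ∈ Set.Icc (c - D) (c + D)) (hy : y ∈ Set.Icc (c - D) (c + D)) :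
    log x - log y ≤ log ((c + D) / (c - D)) := by
  have hy0 : 0 < y := by linarith [hy.1]
  rw [← log_div (by linarith [hx.1]) hy0.ne']
  exact log_le_log (div_pos (by linarith [hx.1]) hy0)
    (div_le_div₀ (by linarith [hx.1, hx.2]) hx.2 (by linarith) hy.1)

lemma abs_log_sub_log_le_log_div_of_mem_Icc {c D x y : ℝ} (hD : D < c)
    (hx : x ∈ Set.Icc (c - D) (c + D)) (hy : y ∈ Set.Icc (c - D) (c + D)) :
    |log x - log y| ≤ log ((c + D) / (c - D)) :=
  abs_sub_le_iff.2 ⟨log_sub_log_le_log_div_of_mem_Icc hD hx hy,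
    log_sub_log_le_log_div_of_mem_Icc hD hy hx⟩

lemma log_add_div_sub_le {c D : ℝ} (hc : 0 < c) (hD0 : 0 ≤ D) (hD : D ≤ c / 5) :
    log ((c + D) / (c - D)) ≤ 5 * D / (2 * c) := by
  have hcD : 0 < c - D := by linarith
  calc log ((c + D) / (c - D)) ≤ (c + D) / (c - D) - 1 :=
        log_le_sub_one_of_pos (div_pos (by linarith) hcD)
    _ = 2 * D / (c - D) := by field_simp; ring
    _ ≤ 5 * D / (2 * c) := by
        rw [div_le_div_iff₀ hcD (by positivity)]
        nlinarith

lemma log_choose_succ_sub_log_choose {n l : ℕ} (hl : l < n) :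
    log (n.choose (l + 1)) - log (n.choose l) = log (n - l) - log (l + 1) := by
  have hid : (n.choose (l + 1) : ℝ) * (l + 1) = n.choose l * (n - l) := by
    have := congrArg (Nat.cast : ℕ → ℝ) (Nat.choose_succ_right_eq n l)
    push_cast [Nat.cast_sub hl.le] at this
    exact this
  have h1 : (0 : ℝ) < n.choose (l + 1) := by exact_mod_cast Nat.choose_pos hl
  have h2 : (0 : ℝ) < n.choose l := by exact_mod_cast Nat.choose_pos hl.le
  have h3 : (0 : ℝ) < n - l := by
    have : (l : ℝ) < n := by exact_mod_cast hl
    linarith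
  have := congrArg log hid
  rw [log_mul h1.ne' (by positivity), log_mul h2.ne' h3.ne'] at this
  linarith

lemma abs_log_choose_succ_sub_log_choose_le {n l : ℕ} {D : ℝ} (hD : D < n / 2)
    (hl : n / 2 - D ≤ l) (hl' : (l : ℝ) + 1 ≤ n / 2 + D) :
    |log (n.choose (l + 1)) - log (n.choose l)| ≤ log ((n / 2 + D) / (n / 2 - D)) := by
  have hln : l < n := by exact_mod_cast (show (l : ℝ) < n by linarith)
  rw [log_choose_succ_sub_log_choose hln]
  exact abs_log_sub_log_le_log_div_of_mem_Icc hD ⟨by linarith, by linarith⟩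
    ⟨by linarith, hl'⟩

lemma abs_log_choose_sub_log_choose_le {n l₁ l₂ : ℕ} {D : ℝ} (hD : D < n / 2)
    (hl₁ : n / 2 - D ≤ l₁) (hl : l₁ ≤ l₂) (hl₂ : l₂ ≤ n / 2 + D) :
    |log (n.choose l₁) - log (n.choose l₂)|
      ≤ (l₂ - l₁ : ℕ) * log ((n / 2 + D) / (n / 2 - D)) := by
  calc |log (n.choose l₁) - log (n.choose l₂)|
      ≤ ∑ l ∈ Ico l₁ l₂, dist (log (n.choose l)) (log (n.choose (l + 1))) :=
        dist_le_Ico_sum_dist (fun l => log (n.choose l)) hl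
    _ ≤ #(Ico l₁ l₂) • log ((n / 2 + D) / (n / 2 - D)) := by
        refine sum_le_card_nsmul _ _ _ fun l hmem => ?_
        obtain ⟨h₁, h₂⟩ := mem_Ico.1 hmem
        rw [dist_comm, Real.dist_eq]
        refine abs_log_choose_succ_sub_log_choose_le hD ?_ ?_
        · exact hl₁.trans (by exact_mod_cast h₁)
        · exact le_trans (by exact_mod_cast h₂) hl₂
    _ = (l₂ - l₁ : ℕ) * log ((n / 2 + D) / (n / 2 - D)) := by
        rw [Nat.card_Ico, nsmul_eq_mul]

lemma mul_sqrt_mul_le {C L x k ξ : ℝ} (hC : 0 < C) (hL : 0 < L) (hx : 0 ≤ x)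
    (hk : k ≤ 1 / (10 * √C) * ξ * √(x / L)) :
    k * √(C * x * L) ≤ ξ * x / 10 := by
  have hprod : √(x / L) * √(C * x * L) = √C * x := by
    rw [← sqrt_mul (by positivity), show x / L * (C * x * L) = C * (x * x) by field_simp,
      sqrt_mul hC.le, sqrt_mul_self hx]
  have hsC : 0 < √C := sqrt_pos.2 hC
  calc k * √(C * x * L) ≤ 1 / (10 * √C) * ξ * √(x / L) * √(C * x * L) :=
        mul_le_mul_of_nonneg_right hk (sqrt_nonneg _)
    _ = ξ * x / 10 := by rw [mul_assoc, hprod]; field_simp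

lemma eventually_sqrt_mul_log_le {C : ℝ} (hC : 0 < C) :
    ∀ᶠ n : ℕ in atTop, √(C * n * log n) ≤ n / 10 := by
  have h := (isLittleO_log_id_atTop.comp_tendsto tendsto_natCast_atTop_atTop).def
    (show 0 < 1 / (100 * C) by positivity)
  filter_upwards [h] with n hn
  simp only [Function.comp_apply, id, norm_eq_abs, Nat.abs_cast] at hn
  have hlog : C * log n ≤ n / 100 := by
    have := mul_le_mul_of_nonneg_left ((le_abs_self _).trans hn) hC.le
    calc C * log n ≤ C * (1 / (100 * C) * n) := this
      _ = n / 100 := by field_simp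
  rw [sqrt_le_left (by positivity)]
  calc C * n * log n = n * (C * log n) := by ring
    _ ≤ n * (n / 100) := by gcongr
    _ = (n / 10) ^ 2 := by ring

theorem hypercube_continuity_general (C1 ξ : ℝ) (hC1 : 0 < C1) (hξ1 : ξ ≤ 1) :
    ∃ N : ℕ, ∀ n : ℕ, N ≤ n → ∀ l1 l2 : ℕ,
      (n : ℝ) / 2 - Real.sqrt (C1 * n * Real.log n) ≤ (l1 : ℝ) →
      l1 ≤ l2 →
      (l2 : ℝ) ≤ (n : ℝ) / 2 + Real.sqrt (C1 * n * Real.log n) →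
      (l2 : ℝ) - (l1 : ℝ) ≤ (1 / (10 * Real.sqrt C1)) * ξ * Real.sqrt ((n : ℝ) / Real.log n) →
      1 - ξ ≤ (n.choose l1 : ℝ) / (n.choose l2 : ℝ) ∧
        (n.choose l1 : ℝ) / (n.choose l2 : ℝ) ≤ 1 + ξ := by
  obtain ⟨N, hN⟩ := eventually_atTop.1
    ((eventually_ge_atTop 2).and (eventually_sqrt_mul_log_le hC1))
  refine ⟨N, fun n hn l1 l2 h1 h12 h2 hk => ?_⟩
  obtain ⟨hn2, hD⟩ := hN n hn
  set D := √(C1 * n * log n)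
  have hnR : (2 : ℝ) ≤ n := by exact_mod_cast hn2
  have hD0 : 0 ≤ D := sqrt_nonneg _
  have hl2 : l2 ≤ n := by exact_mod_cast (show (l2 : ℝ) ≤ n by linarith)
  have hkD : ((l2 - l1 : ℕ) : ℝ) * D ≤ ξ * n / 10 :=
    mul_sqrt_mul_le hC1 (log_pos (by linarith)) (by linarith) (by push_cast [h12]; exact hk)
  have ht : |log (n.choose l1) - log (n.choose l2)| ≤ ξ / 2 :=
    calc |log (n.choose l1) - log (n.choose l2)|
        ≤ (l2 - l1 : ℕ) * log ((n / 2 + D) / (n / 2 - D)) :=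
          abs_log_choose_sub_log_choose_le (by linarith) h1 h12 h2
      _ ≤ (l2 - l1 : ℕ) * (5 * D / (2 * (n / 2))) := by
          gcongr
          exact log_add_div_sub_le (by linarith) hD0 (by linarith)
      _ = 5 * ((l2 - l1 : ℕ) * D) / n := by field_simp
      _ ≤ ξ / 2 := by
          rw [div_le_iff₀ (by linarith)]
          linarith
  have hratio : (n.choose l1 : ℝ) / n.choose l2 = exp (log (n.choose l1) - log (n.choose l2)) := by
    rw [exp_sub, exp_log (by exact_mod_cast Nat.choose_pos (h12.trans hl2)),
      exp_log (by exact_mod_cast Nat.choose_pos hl2)]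
  have hexp := abs_exp_sub_one_le (ht.trans (by linarith))
  rw [hratio]
  constructor <;> linarith [abs_le.1 hexp]

/-- **Hypercube Continuity Lemma.** For every real constant `C1 > 0` and every real
`ξ` with `0 < ξ ≤ 1`, there exists `N` such that for all `n ≥ N`: for all integers
`l1 ≤ l2` lying between `n/2 − √(C1·n·ln n)` and `n/2 + √(C1·n·ln n)`, if
`l2 − l1 ≤ (1/(10·√C1))·ξ·√(n/ln n)`, then
`1 − ξ ≤ C(n,l1)/C(n,l2) ≤ 1 + ξ`. -/
theorem hypercube_continuity (C1 ξ : ℝ) (hC1 : 0 < C1) (hξ0 : 0 < ξ) (hξ1 : ξ ≤ 1) :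
    ∃ N : ℕ, ∀ n : ℕ, N ≤ n → ∀ l1 l2 : ℕ,
      (n : ℝ) / 2 - Real.sqrt (C1 * n * Real.log n) ≤ (l1 : ℝ) →
      l1 ≤ l2 →
      (l2 : ℝ) ≤ (n : ℝ) / 2 + Real.sqrt (C1 * n * Real.log n) →
      (l2 : ℝ) - (l1 : ℝ) ≤ (1 / (10 * Real.sqrt C1)) * ξ * Real.sqrt ((n : ℝ) / Real.log n) →
      1 - ξ ≤ (n.choose l1 : ℝ) / (n.choose l2 : ℝ) ∧
        (n.choose l1 : ℝ) / (n.choose l2 : ℝ) ≤ 1 + ξ :=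
  hypercube_continuity_general C1 ξ hC1 hξ1
end

section
/- Let C > 0 be a constant. There exists N such that for all n ≥ N the following holds: let f : {0,1}^n → {0,1} satisfy I[f] ≥ n^{−C}, let t1 = (√C + 4)·√(n·ln n), and let M be the set of hypercube edges (v1, v2) (with v2 ≺ v1) such that n/2 − t1 ≤ L(v2) ≤ L(v1) ≤ n/2 + t1. Then the number of influential edges of f not belonging to M is at most |E_I|/n; in particular |M ∩ E_I| ≥ (1 − 1/n)·|E_I|. -/
open Finset

/-- Level (Hamming weight) of a point of the Boolean cube. -/
def level {n : ℕ} (x : Fin n → Bool) : ℕ :=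
  (Finset.univ.filter (fun i => x i = true)).card

/-- Probability, under the noise distribution `T_δ`, of obtaining the pair `(x, z)`:
`x` is uniform on `{0,1}^n` and each coordinate of `z` independently equals the
corresponding coordinate of `x` with probability `1 − δ` and is flipped with
probability `δ`. -/
noncomputable def noisePairProb (n : ℕ) (δ : ℝ) (x z : Fin n → Bool) : ℝ :=
  (1 / 2 ^ n) * ∏ i : Fin n, (if z i = x i then 1 - δ else δ)

/-- Noise sensitivity: `NS_δ[f] = Pr_{(x,z)∼T_δ}[f(x) ≠ f(z)]`. -/
noncomputable def NS (n : ℕ) (δ : ℝ) (f : (Fin n → Bool) → Bool) : ℝ :=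
  ∑ x : Fin n → Bool, ∑ z : Fin n → Bool,
    noisePairProb n δ x z * (if f x ≠ f z then 1 else 0)

/-- Influence: `I[f] = n · Pr_{x, i}[f(x) ≠ f(x^{⊕i})]`. -/
noncomputable def influence (n : ℕ) (f : (Fin n → Bool) → Bool) : ℝ :=
  (1 / 2 ^ n) * ∑ x : Fin n → Bool, ∑ i : Fin n,
    (if f x ≠ f (Function.update x i (!(x i))) then (1 : ℝ) else 0)

/-- Bias: `B[f] = Pr_{x uniform}[f(x) = 1]`. -/
noncomputable def bias (n : ℕ) (f : (Fin n → Bool) → Bool) : ℝ :=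
  (1 / 2 ^ n) * ∑ x : Fin n → Bool, (if f x = true then (1 : ℝ) else 0)

/-- The set of influential edges of `f`, each edge represented by its upper endpoint
together with the coordinate being flipped (the lower endpoint is obtained by
setting that coordinate, which equals `1`, to `0`). -/
def influentialEdges (n : ℕ) (f : (Fin n → Bool) → Bool) :
    Finset ((Fin n → Bool) × Fin n) :=
  Finset.univ.filter (fun p =>
    p.1 p.2 = true ∧ f p.1 ≠ f (Function.update p.1 p.2 false))

/-- The quantity `t1 = (√C + 4)·√(n·ln n)`. -/
noncomputable def t1R (C : ℝ) (n : ℕ) : ℝ :=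
  (Real.sqrt C + 4) * Real.sqrt ((n : ℝ) * Real.log n)

/-- The predicate saying that the edge `p` (upper endpoint `p.1`, lower endpoint
obtained by setting coordinate `p.2` to `0`) belongs to the set `M` of middle edges:
both endpoint levels lie in `[n/2 − t1, n/2 + t1]`. -/
def inMiddle (n : ℕ) (t1 : ℝ) (p : (Fin n → Bool) × Fin n) : Prop :=
  (n : ℝ) / 2 - t1 ≤ (level (Function.update p.1 p.2 false) : ℝ) ∧
    (level p.1 : ℝ) ≤ (n : ℝ) / 2 + t1

noncomputable instance (n : ℕ) (t1 : ℝ) : DecidablePred (inMiddle n t1) :=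
  fun p => inferInstanceAs (Decidable (_ ∧ _))

/-! Count each influential edge at its upper endpoint `x`. If the edge leaves the middle band,
then `|L(x) - n/2| ≥ t1 - 1`, so there are at most `n` times as many such edges as points that
far from the middle level. The exponential moment
`∑ₓ exp (l (L(x) - n/2)) = (2 cosh (l/2))ⁿ ≤ 2ⁿ exp (n l²/8)` bounds that number by
`2 · 2ⁿ · exp (-2 (t1 - 1)² / n) ≤ 2 · 2ⁿ · n^(-2C - 18)`, whereas `|E_I| = 2ⁿ⁻¹ I[f] ≥ 2ⁿ⁻¹ n^(-C)`. -/

lemma level_update_false {n : ℕ} (x : Fin n → Bool) {i : Fin n} (hi : x i = true) :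
    (level (Function.update x i false) : ℝ) = level x - 1 := by
  have hmem : i ∈ univ.filter (fun j => x j = true) := by simp [hi]
  have herase : univ.filter (fun j => Function.update x i false j = true)
      = (univ.filter fun j => x j = true).erase i := by
    ext j
    rcases eq_or_ne j i with rfl | hji <;> simp [Function.update_apply, *]
  rw [level, level, herase, card_erase_of_mem hmem,
    Nat.cast_sub (card_pos.mpr ⟨i, hmem⟩), Nat.cast_one]

lemma sum_exp_mul_level_sub_half (n : ℕ) (l : ℝ) :
    ∑ x : Fin n → Bool, Real.exp (l * (level x - n / 2 : ℝ))
      = (2 * Real.cosh (l / 2)) ^ n := by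
  have hprod (x : Fin n → Bool) : Real.exp (l * (level x - n / 2 : ℝ))
      = ∏ i, Real.exp (l * ((if x i then 1 else 0) - 1 / 2)) := by
    have hlevel : (level x : ℝ) = ∑ i, if x i then 1 else 0 := by simp [level]
    rw [← Real.exp_sum, ← mul_sum, sum_sub_distrib, hlevel]
    simp [div_eq_mul_inv]
  simp_rw [hprod, ← Fintype.prod_sum (fun (_ : Fin n) (b : Bool) =>
    Real.exp (l * ((if b then 1 else 0) - 1 / 2))), Fintype.sum_bool, Real.cosh_eq]
  simp only [if_true, Bool.false_eq_true, if_false, prod_const, card_univ, Fintype.card_fin]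
  ring_nf

lemma card_filter_le_abs_mul_exp_le {α : Type*} (s : Finset α) (g : α → ℝ) {l : ℝ}
    (hl : 0 ≤ l) (t : ℝ) :
    #(s.filter fun x => t ≤ |g x|) * Real.exp (l * t)
      ≤ ∑ x ∈ s, (Real.exp (l * g x) + Real.exp (-(l * g x))) := by
  rw [← nsmul_eq_mul, ← sum_const]
  calc ∑ _x ∈ s.filter (fun x => t ≤ |g x|), Real.exp (l * t)
      ≤ ∑ x ∈ s.filter (fun x => t ≤ |g x|), (Real.exp (l * g x) + Real.exp (-(l * g x))) := by
        refine sum_le_sum fun x hx => ?_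
        calc Real.exp (l * t) ≤ Real.exp |l * g x| := by
              rw [abs_mul, abs_of_nonneg hl]
              exact Real.exp_le_exp.mpr (mul_le_mul_of_nonneg_left (mem_filter.mp hx).2 hl)
          _ ≤ _ := Real.exp_abs_le _
    _ ≤ _ := sum_le_sum_of_subset_of_nonneg (filter_subset _ _) fun _ _ _ => by positivity

lemma card_filter_le_abs_level_sub_half_le {n : ℕ} (hn : 0 < n) {t : ℝ} (ht : 0 ≤ t) :
    (#(univ.filter fun x : Fin n → Bool => t ≤ |(level x - n / 2 : ℝ)|) : ℝ)
      ≤ 2 * 2 ^ n * Real.exp (-2 * t ^ 2 / n) := by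
  have hnR : (0 : ℝ) < n := Nat.cast_pos.mpr hn
  -- `l = 4t/n` minimizes the Chernoff exponent `n l² / 8 - l t`.
  set l : ℝ := 4 * t / n
  have hmarkov := card_filter_le_abs_mul_exp_le univ (fun x : Fin n → Bool => (level x - n / 2 : ℝ))
    (l := l) (by positivity) t
  have hsum : ∑ x : Fin n → Bool,
      (Real.exp (l * (level x - n / 2 : ℝ)) + Real.exp (-(l * (level x - n / 2 : ℝ))))
        ≤ 2 * 2 ^ n * Real.exp (n * l ^ 2 / 8) := by
    simp_rw [sum_add_distrib, ← neg_mul, sum_exp_mul_level_sub_half, neg_div, Real.cosh_neg]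
    rw [← two_mul, mul_pow, mul_assoc]
    gcongr
    calc Real.cosh (l / 2) ^ n ≤ Real.exp ((l / 2) ^ 2 / 2) ^ n := by
          gcongr
          exact Real.cosh_le_exp_half_sq _
      _ = _ := by rw [← Real.exp_nat_mul]; ring_nf
  have hexponent : n * l ^ 2 / 8 - l * t = -2 * t ^ 2 / n := by
    simp only [l]; field_simp; ring
  rw [← hexponent, Real.exp_sub, mul_div_assoc', le_div_iff₀ (Real.exp_pos _)]
  exact hmarkov.trans hsum

lemma card_filter_not_inMiddle_le (n : ℕ) (f : (Fin n → Bool) → Bool) (t1 : ℝ) :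
    #((influentialEdges n f).filter fun p => ¬ inMiddle n t1 p)
      ≤ #(univ.filter fun x : Fin n → Bool => t1 - 1 ≤ |(level x - n / 2 : ℝ)|) * n := by
  calc #((influentialEdges n f).filter fun p => ¬ inMiddle n t1 p)
      ≤ #((univ.filter fun x : Fin n → Bool => t1 - 1 ≤ |(level x - n / 2 : ℝ)|) ×ˢ univ) := by
        refine card_le_card fun p hp => ?_
        simp only [influentialEdges, inMiddle, mem_filter, mem_univ, true_and, not_and_or,
          not_le, mem_product, and_true] at hp ⊢
        obtain ⟨⟨hup, -⟩, hout⟩ := hp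
        rw [level_update_false _ hup] at hout
        rcases hout with hout | hout
        · linarith [neg_le_abs ((level p.1 : ℝ) - n / 2)]
        · linarith [le_abs_self ((level p.1 : ℝ) - n / 2)]
    _ = _ := by rw [card_product, card_univ, Fintype.card_fin]

lemma influence_eq_two_mul_card_div (n : ℕ) (f : (Fin n → Bool) → Bool) :
    influence n f = 2 * #(influentialEdges n f) / 2 ^ n := by
  set flip : (Fin n → Bool) × Fin n → (Fin n → Bool) × Fin n :=
    fun p => (Function.update p.1 p.2 (!p.1 p.2), p.2)
  have hflip : Function.Involutive flip := fun p => by simp [flip]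
  set g : (Fin n → Bool) × Fin n → ℝ := fun p => if f p.1 ≠ f (flip p).1 then 1 else 0
  have hg (p) : g (flip p) = g p := by simp only [g, hflip p, ne_comm]
  have hsplit :
      ∑ p, g p = ∑ p, (if p.1 p.2 then g p else 0) + ∑ p, (if p.1 p.2 then 0 else g p) := by
    rw [← sum_add_distrib]
    exact sum_congr rfl fun p _ => by split_ifs <;> simp
  -- `flip` exchanges the two endpoints of an edge, so each edge is counted once from each side.
  have hsum_false : ∑ p, (if p.1 p.2 then 0 else g p) = ∑ p, (if p.1 p.2 then g p else 0) := by
    rw [← Equiv.sum_comp (hflip.toPerm flip)]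
    simp only [flip, hg, Function.Involutive.coe_toPerm, Function.update_self]
    refine sum_congr rfl fun p _ => ?_
    cases p.1 p.2 <;> rfl
  have hsum_true : ∑ p, (if p.1 p.2 then g p else 0) = (#(influentialEdges n f) : ℝ) := by
    rw [influentialEdges, natCast_card_filter]
    refine sum_congr rfl fun p _ => ?_
    cases hp : p.1 p.2 <;> simp [g, flip, hp]
  rw [influence, ← Fintype.sum_prod_type' (f := fun x i => g (x, i)), hsplit, hsum_false, hsum_true]
  ring

lemma one_le_sqrt_mul_log {n : ℕ} (hn : 3 ≤ n) : 1 ≤ Real.sqrt (n * Real.log n) := by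
  have hn3 : (3 : ℝ) ≤ n := by exact_mod_cast hn
  have hlog : 1 ≤ Real.log n := by
    rw [Real.le_log_iff_exp_le (by positivity)]
    linarith [Real.exp_one_lt_three]
  exact Real.one_le_sqrt.mpr (by nlinarith)

lemma mul_sqrt_le_t1R_sub_one (C : ℝ) {n : ℕ} (hn : 3 ≤ n) :
    (Real.sqrt C + 3) * Real.sqrt (n * Real.log n) ≤ t1R C n - 1 := by
  rw [t1R]
  linarith [one_le_sqrt_mul_log hn]

lemma four_mul_sq_mul_exp_le_rpow_neg (C : ℝ) {n : ℕ} (hn : 3 ≤ n) :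
    4 * n ^ 2 * Real.exp (-2 * (t1R C n - 1) ^ 2 / n) ≤ (n : ℝ) ^ (-C) := by
  have hn3 : (3 : ℝ) ≤ n := by exact_mod_cast hn
  have hnR : (0 : ℝ) < n := by positivity
  set c := Real.sqrt C ^ 2
  have hc : 0 ≤ c := sq_nonneg _
  have hCc : C ≤ c := by
    rcases le_total 0 C with hC | hC
    · exact (Real.sq_sqrt hC).ge
    · linarith
  have hsq : (c + 9) * (n * Real.log n) ≤ (t1R C n - 1) ^ 2 := by
    have hs : Real.sqrt (n * Real.log n) ^ 2 = n * Real.log n :=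
      Real.sq_sqrt (mul_nonneg hnR.le (Real.log_nonneg (by linarith)))
    calc (c + 9) * (n * Real.log n)
        ≤ ((Real.sqrt C + 3) * Real.sqrt (n * Real.log n)) ^ 2 := by
          rw [mul_pow, hs]
          gcongr
          nlinarith [Real.sqrt_nonneg C]
      _ ≤ (t1R C n - 1) ^ 2 := by
          gcongr
          exact mul_sqrt_le_t1R_sub_one C hn
  have hexp : Real.exp (-2 * (t1R C n - 1) ^ 2 / n) ≤ (n : ℝ) ^ (-(2 * c + 18)) := by
    rw [Real.rpow_def_of_pos hnR, Real.exp_le_exp, div_le_iff₀ hnR]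
    nlinarith
  calc 4 * n ^ 2 * Real.exp (-2 * (t1R C n - 1) ^ 2 / n)
      ≤ (n : ℝ) ^ (4 : ℝ) * (n : ℝ) ^ (-(2 * c + 18)) := by
        gcongr
        rw [show (n : ℝ) ^ (4 : ℝ) = (n : ℝ) ^ (4 : ℕ) by norm_cast]
        have h4 : (4 : ℝ) ≤ n ^ 2 := by nlinarith
        nlinarith [mul_le_mul_of_nonneg_right h4 (sq_nonneg (n : ℝ))]
    _ = (n : ℝ) ^ (4 - (2 * c + 18)) := by rw [← Real.rpow_add hnR]; ring_nf
    _ ≤ (n : ℝ) ^ (-C) := Real.rpow_le_rpow_of_exponent_le (by linarith) (by linarith)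

theorem influential_edges_mostly_middle_general (C : ℝ) :
    ∃ N : ℕ, ∀ n : ℕ, N ≤ n → ∀ f : (Fin n → Bool) → Bool,
      (n : ℝ) ^ (-C) ≤ influence n f →
      ((((influentialEdges n f).filter (fun p => ¬ inMiddle n (t1R C n) p)).card : ℝ)
          ≤ ((influentialEdges n f).card : ℝ) / n ∧
        (1 - 1 / (n : ℝ)) * ((influentialEdges n f).card : ℝ)
          ≤ (((influentialEdges n f).filter (fun p => inMiddle n (t1R C n) p)).card : ℝ)) := by
  refine ⟨3, fun n hn f hf => ?_⟩
  have hnR : (0 : ℝ) < n := by positivity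
  set E : ℝ := (#(influentialEdges n f) : ℝ)
  have hE : 2 ^ n * (n : ℝ) ^ (-C) / 2 ≤ E := by
    rw [influence_eq_two_mul_card_div, le_div_iff₀ (by positivity)] at hf
    linarith
  have ht : 0 ≤ t1R C n - 1 :=
    (mul_nonneg (by positivity) (Real.sqrt_nonneg _)).trans (mul_sqrt_le_t1R_sub_one C hn)
  have hout : (#((influentialEdges n f).filter fun p => ¬ inMiddle n (t1R C n) p) : ℝ) ≤ E / n :=
    calc _ ≤ (#(univ.filter fun x : Fin n → Bool => t1R C n - 1 ≤ |(level x - n / 2 : ℝ)|) : ℝ)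
            * n := by exact_mod_cast card_filter_not_inMiddle_le n f _
      _ ≤ 2 * 2 ^ n * Real.exp (-2 * (t1R C n - 1) ^ 2 / n) * n := by
          gcongr
          exact card_filter_le_abs_level_sub_half_le (by omega) ht
      _ = 2 ^ n / (2 * n) * (4 * n ^ 2 * Real.exp (-2 * (t1R C n - 1) ^ 2 / n)) := by
          field_simp
          ring
      _ ≤ 2 ^ n / (2 * n) * (n : ℝ) ^ (-C) := by
          gcongr
          exact four_mul_sq_mul_exp_le_rpow_neg C hn
      _ ≤ E / n := by
          rw [show 2 ^ n / (2 * n) * (n : ℝ) ^ (-C) = 2 ^ n * (n : ℝ) ^ (-C) / 2 / n by ring]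
          gcongr
  refine ⟨hout, ?_⟩
  have hsplit : (#((influentialEdges n f).filter fun p => inMiddle n (t1R C n) p) : ℝ)
      + #((influentialEdges n f).filter fun p => ¬ inMiddle n (t1R C n) p) = E := by
    rw [← Nat.cast_add, card_filter_add_card_filter_not]
  have hE_sub : (1 - 1 / (n : ℝ)) * E = E - E / n := by ring
  linarith

/-- Let `C > 0`. For all sufficiently large `n`, if `I[f] ≥ n^{−C}`,
`t1 = (√C + 4)·√(n·ln n)`, and `M` is the set of edges `(v1, v2)` (with `v2 ≺ v1`)
whose endpoint levels lie in `[n/2 − t1, n/2 + t1]`, then the number of influential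
edges outside `M` is at most `|E_I|/n`; in particular
`|M ∩ E_I| ≥ (1 − 1/n)·|E_I|`. -/
theorem influential_edges_mostly_middle (C : ℝ) (hC : 0 < C) :
    ∃ N : ℕ, ∀ n : ℕ, N ≤ n → ∀ f : (Fin n → Bool) → Bool,
      (n : ℝ) ^ (-C) ≤ influence n f →
      ((((influentialEdges n f).filter (fun p => ¬ inMiddle n (t1R C n) p)).card : ℝ)
          ≤ ((influentialEdges n f).card : ℝ) / n ∧
        (1 - 1 / (n : ℝ)) * ((influentialEdges n f).card : ℝ)
          ≤ (((influentialEdges n f).filter (fun p => inMiddle n (t1R C n) p)).card : ℝ)) :=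
  influential_edges_mostly_middle_general C
end

section
/- Fix a constant C1 ≥ 1. There exists N such that for all n ≥ N the following holds: let θ be the smallest integer greater than n/2 such that Pr_{x uniform on {0,1}^n}[L(x) > θ] ≤ 1/n^{C1}. Then Pr_{x uniform on {0,1}^n}[L(x) > θ] ≥ 1/(3·n^{C1}); that is, the bias of the threshold function f0(x) = 1 iff L(x) > θ satisfies 1/(3·n^{C1}) ≤ B[f0] ≤ 1/n^{C1}. -/
open Finset

/-- `tailProb n θ = Pr_{x uniform on {0,1}^n}[L(x) > θ]`. -/
noncomputable def tailProb (n θ : ℕ) : ℝ :=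
  (1 / 2 ^ n) * ∑ x : Fin n → Bool, (if θ < level x then (1 : ℝ) else 0)

/-- `isMinimalThreshold C1 n θ` says that `θ` is the smallest integer greater than
`n/2` such that `Pr[L(x) > θ] ≤ 1/n^{C1}`. -/
def isMinimalThreshold (C1 : ℝ) (n θ : ℕ) : Prop :=
  (n : ℝ) / 2 < (θ : ℝ) ∧ tailProb n θ ≤ 1 / (n : ℝ) ^ C1 ∧
    ∀ θ' : ℕ, (n : ℝ) / 2 < (θ' : ℝ) → tailProb n θ' ≤ 1 / (n : ℝ) ^ C1 → θ ≤ θ'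

/-!
Write `T k = Pr[L(x) > k]`. Minimality of `θ` gives `T (θ - 1) > n^{-C1}`: either
`θ - 1 > n/2`, or `θ - 1 ≤ n/2` and then `T (θ - 1) ≥ T ⌊n/2⌋ ≥ 1/4`.
Since `T (θ - 1) = Pr[L = θ] + T θ` and `Pr[L = θ] ≤ 2 Pr[L = θ + 1]` as long as `3θ < 2n`,
in that range `T (θ - 1) ≤ 3 T θ`.
The range `3θ ≥ 2n` is excluded for large `n` by the exponential-moment bound
`2^θ T (θ - 1) ≤ E[2^L] = (3/2)^n`, which makes `T (θ - 1) ≤ (27/32)^{n/3} < n^{-C1}`.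
-/

open Filter

def cubeEquivFinset (n : ℕ) : (Fin n → Bool) ≃ Finset (Fin n) where
  toFun x := univ.filter (fun i => x i = true)
  invFun s i := decide (i ∈ s)
  left_inv x := by ext i; simp
  right_inv s := by ext i; simp

theorem sum_comp_level {M : Type*} [AddCommMonoid M] (n : ℕ) (f : ℕ → M) :
    ∑ x : Fin n → Bool, f (level x) = ∑ j ∈ range (n + 1), n.choose j • f j := by
  rw [Fintype.sum_equiv (cubeEquivFinset n) (fun x => f (level x)) (fun s => f s.card)
    fun _ => rfl, ← powerset_univ, sum_powerset_apply_card, card_univ, Fintype.card_fin]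

def tailCount (n k : ℕ) : ℕ := ∑ j ∈ range (n + 1), if k < j then n.choose j else 0

theorem tailCount_antitone (n : ℕ) : Antitone (tailCount n) := fun a b hab =>
  sum_le_sum fun j _ => by split_ifs <;> omega

theorem tailCount_eq_choose_add (n k : ℕ) :
    tailCount n k = n.choose (k + 1) + tailCount n (k + 1) := by
  have hsplit : ∀ j, (if k < j then n.choose j else 0) =
      (if k + 1 = j then n.choose j else 0) + (if k + 1 < j then n.choose j else 0) := by
    intro j; split_ifs <;> omega
  rw [tailCount, sum_congr rfl fun j _ => hsplit j, sum_add_distrib, sum_ite_eq, tailCount]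
  split_ifs with h
  · rfl
  · rw [Nat.choose_eq_zero_of_lt (by simp at h; omega)]

theorem two_pow_mul_tailCount_le (n k : ℕ) : 2 ^ (k + 1) * tailCount n k ≤ 3 ^ n := by
  have h3 : 3 ^ n = ∑ j ∈ range (n + 1), 2 ^ j * n.choose j := by
    simpa [mul_comm] using add_pow (2 : ℕ) 1 n
  rw [h3, tailCount, mul_sum]
  refine sum_le_sum fun j _ => ?_
  split_ifs with h
  · exact Nat.mul_le_mul_right _ (Nat.pow_le_pow_right two_pos h)
  · simp

theorem tailCount_le_three_mul_succ {n k : ℕ} (h : 3 * k + 4 ≤ 2 * n) :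
    tailCount n k ≤ 3 * tailCount n (k + 1) := by
  have hratio : n.choose (k + 1) ≤ 2 * n.choose (k + 1 + 1) := by
    have hpascal := Nat.choose_succ_right_eq n (k + 1)
    refine Nat.le_of_mul_le_mul_right (c := k + 1 + 1) ?_ (by omega)
    calc n.choose (k + 1) * (k + 1 + 1) ≤ n.choose (k + 1) * (2 * (n - (k + 1))) :=
          Nat.mul_le_mul_left _ (by omega)
      _ = 2 * n.choose (k + 1 + 1) * (k + 1 + 1) := by rw [mul_left_comm, ← hpascal]; ring
  have hsucc := tailCount_eq_choose_add n (k + 1)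
  rw [tailCount_eq_choose_add n k]
  omega

theorem tailCount_le_tailCount_succ_succ (n k : ℕ) :
    tailCount n k ≤ tailCount (n + 1) (k + 1) := by
  rw [tailCount, tailCount, sum_range_succ' _ (n + 1)]
  refine le_add_right (sum_le_sum fun j _ => ?_)
  split_ifs <;> first | omega | simp [Nat.choose_succ_succ]

theorem tailCount_odd_half (m : ℕ) : tailCount (2 * m + 1) m = 4 ^ m := by
  have htotal := Nat.sum_range_choose (2 * m + 1)
  have hhalf := Nat.sum_range_choose_halfway m
  rw [show 2 * m + 1 + 1 = (m + 1) + (m + 1) by ring, sum_range_add, hhalf,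
    show 2 ^ (2 * m + 1) = 4 ^ m + 4 ^ m by rw [pow_succ, pow_mul]; norm_num; ring] at htotal
  rw [tailCount, show 2 * m + 1 + 1 = (m + 1) + (m + 1) by ring, sum_range_add,
    sum_eq_zero fun j hj => if_neg (by simp at hj; omega), zero_add,
    sum_congr rfl fun j _ => if_pos (by omega)]
  omega

theorem two_pow_le_four_mul_tailCount_half {n : ℕ} (hn : n ≠ 0) :
    2 ^ n ≤ 4 * tailCount n (n / 2) := by
  obtain ⟨m, rfl | rfl⟩ := Nat.even_or_odd' n
  · obtain ⟨m, rfl⟩ := Nat.exists_eq_add_one_of_ne_zero (by omega : m ≠ 0)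
    have h := tailCount_le_tailCount_succ_succ (2 * m + 1) m
    rw [tailCount_odd_half] at h
    rw [show 2 * (m + 1) = 2 * m + 1 + 1 by ring, show (2 * m + 1 + 1) / 2 = m + 1 by omega,
      pow_succ, pow_succ, pow_mul]
    norm_num
    omega
  · rw [show (2 * m + 1) / 2 = m by omega, tailCount_odd_half, pow_succ, pow_mul]
    norm_num
    omega

theorem tailProb_eq (n k : ℕ) : tailProb n k = tailCount n k / 2 ^ n := by
  rw [tailProb, sum_comp_level n fun j => if k < j then (1 : ℝ) else 0, tailCount]
  push_cast
  simp only [nsmul_eq_mul, mul_ite, mul_one, mul_zero]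
  ring

theorem tailProb_nonneg (n k : ℕ) : 0 ≤ tailProb n k := by
  rw [tailProb_eq]; positivity

theorem tailProb_antitone (n : ℕ) : Antitone (tailProb n) := fun a b hab => by
  rw [tailProb_eq, tailProb_eq]
  gcongr
  exact tailCount_antitone n hab

theorem one_div_four_le_tailProb_half {n : ℕ} (hn : n ≠ 0) : 1 / 4 ≤ tailProb n (n / 2) := by
  have h : (2 : ℝ) ^ n ≤ 4 * tailCount n (n / 2) := by
    exact_mod_cast two_pow_le_four_mul_tailCount_half hn
  rw [tailProb_eq, div_le_div_iff₀ (by norm_num) (by positivity)]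
  linarith

theorem tailProb_le_three_mul_succ {n k : ℕ} (h : 3 * k + 4 ≤ 2 * n) :
    tailProb n k ≤ 3 * tailProb n (k + 1) := by
  rw [tailProb_eq, tailProb_eq, mul_div_assoc']
  gcongr
  exact_mod_cast tailCount_le_three_mul_succ h

theorem two_pow_mul_tailProb_le (n k : ℕ) : 2 ^ (k + 1) * tailProb n k ≤ (3 / 2) ^ n := by
  rw [tailProb_eq, div_pow, mul_div_assoc']
  gcongr
  exact_mod_cast two_pow_mul_tailCount_le n k

theorem tailProb_pow_three_le {n k : ℕ} (h : 2 * n ≤ 3 * (k + 1)) :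
    tailProb n k ^ 3 ≤ (27 / 32) ^ n := by
  have h4 : (4 : ℝ) ^ n ≤ (2 ^ (k + 1)) ^ 3 := by
    rw [← pow_mul, show (4 : ℝ) = 2 ^ 2 by norm_num, ← pow_mul]
    exact pow_le_pow_right₀ one_le_two (by omega)
  have hprob := tailProb_nonneg n k
  rw [show (27 / 32 : ℝ) ^ n = (27 / 8) ^ n / 4 ^ n by rw [← div_pow]; norm_num,
    le_div_iff₀ (by positivity)]
  calc tailProb n k ^ 3 * 4 ^ n ≤ tailProb n k ^ 3 * (2 ^ (k + 1)) ^ 3 := by gcongr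
    _ = (2 ^ (k + 1) * tailProb n k) ^ 3 := by ring
    _ ≤ ((3 / 2) ^ n) ^ 3 := by gcongr; exact two_pow_mul_tailProb_le n k
    _ = (27 / 8) ^ n := by rw [← pow_mul, mul_comm, pow_mul]; norm_num

theorem eventually_tailProb_le (C : ℝ) :
    ∀ᶠ n : ℕ in atTop, ∀ k, 2 * n ≤ 3 * (k + 1) → tailProb n k ≤ 1 / (n : ℝ) ^ C := by
  have hlim := tendsto_pow_const_mul_const_pow_of_lt_one (3 * ⌈C⌉₊)
    (by norm_num : (0 : ℝ) ≤ 27 / 32) (by norm_num)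
  filter_upwards [hlim.eventually_lt_const one_pos, eventually_ge_atTop 1]
    with n hsmall hn k hk
  have hn1 : (1 : ℝ) ≤ n := by exact_mod_cast hn
  have hpos : 0 < (n : ℝ) ^ C := by positivity
  have hpow : ((n : ℝ) ^ C) ^ 3 ≤ (n : ℝ) ^ (3 * ⌈C⌉₊) := by
    rw [mul_comm, pow_mul, ← Real.rpow_natCast (n : ℝ) ⌈C⌉₊]
    exact pow_le_pow_left₀ hpos.le (Real.rpow_le_rpow_of_exponent_le hn1 (Nat.le_ceil C)) 3
  have hcube : (tailProb n k * (n : ℝ) ^ C) ^ 3 < 1 := calc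
    (tailProb n k * (n : ℝ) ^ C) ^ 3 = tailProb n k ^ 3 * ((n : ℝ) ^ C) ^ 3 := mul_pow _ _ _
    _ ≤ (27 / 32) ^ n * (n : ℝ) ^ (3 * ⌈C⌉₊) := by
      gcongr
      exact tailProb_pow_three_le hk
    _ < 1 := by rwa [mul_comm]
  rw [le_div_iff₀ hpos]
  have hprod := mul_nonneg (tailProb_nonneg n k) hpos.le
  exact ((pow_lt_one_iff_of_nonneg hprod (by norm_num)).1 hcube).le

theorem isMinimalThreshold.pos {C : ℝ} {n θ : ℕ} (h : isMinimalThreshold C n θ) : 0 < θ := by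
  exact_mod_cast (by positivity : (0 : ℝ) ≤ n / 2).trans_lt h.1

theorem isMinimalThreshold.lt_tailProb_pred {C : ℝ} {n θ : ℕ} (hC : 1 ≤ C) (hn : 5 ≤ n)
    (h : isMinimalThreshold C n θ) : 1 / (n : ℝ) ^ C < tailProb n (θ - 1) := by
  have hθ := h.pos
  obtain ⟨-, -, hmin⟩ := h
  by_cases hpred : (n : ℝ) / 2 < (θ - 1 : ℕ)
  · by_contra! hle
    have := hmin _ hpred hle
    omega
  · have hle : θ - 1 ≤ n / 2 := by
      have : ((θ - 1 : ℕ) : ℝ) * 2 ≤ n := by linarith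
      have : (θ - 1) * 2 ≤ n := by exact_mod_cast this
      omega
    have hn1 : (1 : ℝ) ≤ n := by exact_mod_cast (by omega : 1 ≤ n)
    have hn5 : (5 : ℝ) ≤ n := by exact_mod_cast hn
    calc 1 / (n : ℝ) ^ C ≤ 1 / n := by
          gcongr
          simpa using Real.rpow_le_rpow_of_exponent_le hn1 hC
      _ < 1 / 4 := by gcongr; linarith
      _ ≤ tailProb n (n / 2) := one_div_four_le_tailProb_half (by omega)
      _ ≤ tailProb n (θ - 1) := tailProb_antitone n hle

/-- Fix `C1 ≥ 1`. For all sufficiently large `n`: if `θ` is the smallest integer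
greater than `n/2` with `Pr[L(x) > θ] ≤ 1/n^{C1}`, then
`Pr[L(x) > θ] ≥ 1/(3·n^{C1})`; i.e. the threshold function `f0(x) = 1 ↔ L(x) > θ`
has bias `1/(3·n^{C1}) ≤ B[f0] ≤ 1/n^{C1}`. -/
theorem threshold_bias_lower (C1 : ℝ) (hC1 : 1 ≤ C1) :
    ∃ N : ℕ, ∀ n : ℕ, N ≤ n → ∀ θ : ℕ, isMinimalThreshold C1 n θ →
      1 / (3 * (n : ℝ) ^ C1) ≤ tailProb n θ := by
  obtain ⟨N, hN⟩ := eventually_atTop.1 ((eventually_tailProb_le C1).and (eventually_ge_atTop 5))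
  refine ⟨N, fun n hn θ hθ => ?_⟩
  obtain ⟨hfar, hn5⟩ := hN n hn
  have hpred := hθ.lt_tailProb_pred hC1 hn5
  obtain ⟨k, rfl⟩ := Nat.exists_eq_add_one_of_ne_zero hθ.pos.ne'
  rw [Nat.add_sub_cancel] at hpred
  have hnear : 3 * k + 4 ≤ 2 * n := by
    by_contra! hk
    exact (hfar k (by omega)).not_gt hpred
  calc 1 / (3 * (n : ℝ) ^ C1) = 1 / (n : ℝ) ^ C1 / 3 := by ring
    _ ≤ tailProb n k / 3 := by gcongr
    _ ≤ tailProb n (k + 1) := by linarith [tailProb_le_three_mul_succ hnear]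
end

section
/- Fix a constant C1 ≥ 1. There exists N such that for all n ≥ N the following holds: let θ be the smallest integer greater than n/2 such that Pr_{x uniform on {0,1}^n}[L(x) > θ] ≤ 1/n^{C1}, and let f0 : {0,1}^n → {0,1} be defined by f0(x) = 1 if and only if L(x) > θ. Then 1/(6·n^{C1}) ≤ I[f0] ≤ 2n/n^{C1}. -/
/-! The threshold function at `t` changes value exactly along the edges between levels `t`
and `t + 1`, so its influence is `2 (n - t) C(n, t) / 2^n`. Since
`(n - t) C(n, t) = (t + 1) C(n, t + 1)`, this is at most `2n` times the tail `Pr[L > t]`, which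
gives the upper bound.

For the lower bound, either `θ = ⌊n/2⌋ + 1`, where `C(n, n/2) ≥ 2^n / (n + 1)` makes the
influence at least `1/6`; or `θ - 1` is still above `n/2`, so by minimality
`Pr[L > θ - 1] > n^{-C1}`. As `n^{-C1} ≥ 2^{-n}` for large `n`, this forces `θ < n`, and since
the binomial coefficients decrease above `n/2`, `Pr[L > θ - 1] ≤ (n - θ + 1) C(n, θ) / 2^n`,
which is at most the influence. -/

open Finset

lemma level_le {n : ℕ} (x : Fin n → Bool) : level x ≤ n :=
  (card_filter_le _ _).trans_eq (card_fin n)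

lemma card_filter_level_eq (n k : ℕ) :
    #{x : Fin n → Bool | level x = k} = n.choose k := by
  conv_rhs => rw [← card_fin n, ← card_powersetCard]
  refine card_nbij' (fun x => ({i | x i = true} : Finset (Fin n))) (fun s i => decide (i ∈ s))
    ?_ ?_ ?_ ?_
  · intro x hx
    rw [mem_coe, mem_filter] at hx
    simpa [level] using hx.2
  · intro s hs
    rw [mem_coe, mem_filter]
    simpa [level] using hs
  · intro x _; funext j; simp
  · intro s _; ext j; simp

lemma sum_ite_level_eq {n : ℕ} (k : ℕ) (a : ℝ) :
    ∑ x : Fin n → Bool, (if level x = k then a else 0) = n.choose k * a := by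
  rw [sum_ite, sum_const_zero, add_zero, sum_const, card_filter_level_eq, nsmul_eq_mul]

lemma level_update_not {n : ℕ} (x : Fin n → Bool) (i : Fin n) :
    level (Function.update x i (!x i)) = if x i then level x - 1 else level x + 1 := by
  unfold level
  cases hi : x i
  · rw [if_neg (by simp),
      ← card_insert_of_notMem (s := {j | x j = true}) (a := i) (by simp [hi])]
    congr 1; ext j; rcases eq_or_ne j i with rfl | hj <;> simp [*]
  · rw [if_pos rfl, ← card_erase_of_mem (s := {j | x j = true}) (a := i) (by simp [hi])]
    congr 1; ext j; rcases eq_or_ne j i with rfl | hj <;> simp [*]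

lemma tailProb_eq_s8 (n t : ℕ) :
    tailProb n t = 1 / 2 ^ n * ∑ k ∈ Ioc t n, (n.choose k : ℝ) := by
  have h (x : Fin n → Bool) :
      (if t < level x then (1 : ℝ) else 0) = ∑ k ∈ Ioc t n, if level x = k then 1 else 0 := by
    simp [sum_ite_eq, level_le x]
  simp_rw [tailProb, h]
  rw [sum_comm]
  simp_rw [sum_ite_level_eq, mul_one]

lemma card_filter_not_eq_sub_level {n : ℕ} (x : Fin n → Bool) :
    #{i | ¬x i = true} = n - level x := by
  have h := card_filter_add_card_filter_not (s := univ) (fun i => x i = true)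
  rw [card_univ, Fintype.card_fin] at h
  rw [level]
  omega

lemma sum_threshold_flip_indicator {n : ℕ} (t : ℕ) (x : Fin n → Bool) :
    ∑ i, (if decide (t < level x) ≠ decide (t < level (Function.update x i (!x i)))
      then (1 : ℝ) else 0) =
      (if level x = t then ((n - t : ℕ) : ℝ) else 0) +
        (if level x = t + 1 then (t + 1 : ℝ) else 0) := by
  have h (i : Fin n) :
      (if decide (t < level x) ≠ decide (t < level (Function.update x i (!x i)))
        then (1 : ℝ) else 0) =
        if x i then (if level x = t + 1 then 1 else 0) else (if level x = t then 1 else 0) := by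
    rw [level_update_not]
    cases x i <;> simp only [Bool.false_eq_true, if_true, if_false, ne_eq, decide_eq_decide] <;>
      congr 1 <;> simp only [eq_iff_iff] <;> omega
  rw [sum_congr rfl fun i _ => h i, sum_ite, sum_const, sum_const, card_filter_not_eq_sub_level]
  change (level x • _ : ℝ) + _ = _
  by_cases ht : level x = t
  · simp [ht]
  · by_cases ht' : level x = t + 1
    · simp [ht']
    · simp [ht, ht']

lemma influence_threshold_eq (n t : ℕ) :
    influence n (fun x => decide (t < level x)) =
      1 / 2 ^ n * (2 * (n - t : ℕ) * n.choose t) := by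
  simp_rw [influence, sum_threshold_flip_indicator, sum_add_distrib, sum_ite_level_eq]
  have h : ((n.choose (t + 1) * (t + 1) : ℕ) : ℝ) = (n.choose t * (n - t) : ℕ) := by
    rw [Nat.choose_succ_right_eq]
  push_cast at h
  rw [h]
  ring

lemma choose_le_choose_of_half_le {n a b : ℕ} (hn : n ≤ 2 * a) (hab : a ≤ b) :
    n.choose b ≤ n.choose a := by
  induction b, hab using Nat.le_induction with
  | base => rfl
  | succ b hab ih =>
    refine le_trans (Nat.le_of_mul_le_mul_right ?_ b.succ_pos) ih
    rw [Nat.choose_succ_right_eq]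
    exact Nat.mul_le_mul_left _ (by omega)

lemma two_pow_le_succ_mul_choose_half (n : ℕ) : 2 ^ n ≤ (n + 1) * n.choose (n / 2) :=
  calc 2 ^ n = ∑ k ∈ range (n + 1), n.choose k := (Nat.sum_range_choose n).symm
    _ ≤ ∑ _ ∈ range (n + 1), n.choose (n / 2) := by gcongr; apply Nat.choose_le_middle
    _ = (n + 1) * n.choose (n / 2) := by simp

lemma choose_half_le_two_mul_choose_half_succ {n : ℕ} (hn : 1 ≤ n) :
    n.choose (n / 2) ≤ 2 * n.choose (n / 2 + 1) := by
  refine Nat.le_of_mul_le_mul_right ?_ (n / 2).succ_pos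
  have h := Nat.choose_succ_right_eq n (n / 2)
  calc n.choose (n / 2) * (n / 2 + 1) ≤ n.choose (n / 2) * (2 * (n - n / 2)) :=
        Nat.mul_le_mul_left _ (by omega)
    _ = 2 * n.choose (n / 2 + 1) * (n / 2 + 1) := by rw [mul_assoc 2, h]; ring

lemma sum_choose_Ioc_le {n t : ℕ} (hn : n ≤ 2 * (t + 1)) (ht : t + 1 < n) :
    ∑ k ∈ Ioc t n, n.choose k ≤ 2 * (n - (t + 1)) * n.choose (t + 1) :=
  calc ∑ k ∈ Ioc t n, n.choose k ≤ #(Ioc t n) • n.choose (t + 1) :=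
        sum_le_card_nsmul _ _ _ fun k hk => choose_le_choose_of_half_le hn (by simp at hk; omega)
    _ ≤ 2 * (n - (t + 1)) * n.choose (t + 1) := by
        rw [Nat.card_Ioc, smul_eq_mul]; exact Nat.mul_le_mul_right _ (by omega)

lemma choose_succ_le_tailProb (n t : ℕ) :
    1 / 2 ^ n * (n.choose (t + 1) : ℝ) ≤ tailProb n t := by
  rw [tailProb, ← mul_one (n.choose (t + 1) : ℝ), ← sum_ite_level_eq]
  gcongr with x
  split_ifs <;> first | omega | norm_num

lemma tailProb_le_of_le {n t : ℕ} (ht : n ≤ t + 1) : tailProb n t ≤ 1 / 2 ^ n := by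
  calc tailProb n t
      ≤ 1 / 2 ^ n * ∑ x : Fin n → Bool, if level x = n then (1 : ℝ) else 0 := by
        rw [tailProb]
        gcongr with x
        have := level_le x
        split_ifs <;> first | omega | norm_num
    _ = 1 / 2 ^ n := by rw [sum_ite_level_eq, Nat.choose_self]; simp

lemma influence_threshold_le (n t : ℕ) :
    influence n (fun x => decide (t < level x)) ≤ 2 * n * tailProb n t := by
  have h : ((n - t) * n.choose t : ℕ) ≤ n * n.choose (t + 1) := by
    rw [mul_comm, ← Nat.choose_succ_right_eq, mul_comm]
    rcases le_or_gt (t + 1) n with ht | ht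
    · exact Nat.mul_le_mul_right _ ht
    · simp [Nat.choose_eq_zero_of_lt ht]
  calc influence n (fun x => decide (t < level x))
      = 2 * (1 / 2 ^ n * ((n - t) * n.choose t : ℕ)) := by
        rw [influence_threshold_eq]; push_cast; ring
    _ ≤ 2 * (1 / 2 ^ n * (n * n.choose (t + 1) : ℕ)) := by gcongr
    _ = 2 * n * (1 / 2 ^ n * (n.choose (t + 1) : ℝ)) := by push_cast; ring
    _ ≤ 2 * n * tailProb n t := by gcongr; exact choose_succ_le_tailProb n t

lemma tailProb_le_influence_threshold_succ {n t : ℕ} (hn : n ≤ 2 * (t + 1))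
    (ht : t + 1 < n) :
    tailProb n t ≤ influence n (fun x => decide (t + 1 < level x)) := by
  rw [tailProb_eq_s8, influence_threshold_eq]
  gcongr
  exact_mod_cast sum_choose_Ioc_le hn ht

lemma one_div_six_le_influence_threshold_half {n : ℕ} (hn : 3 ≤ n) :
    1 / 6 ≤ influence n (fun x => decide (n / 2 + 1 < level x)) := by
  have h : 2 ^ n ≤ 6 * (2 * (n - (n / 2 + 1)) * n.choose (n / 2 + 1)) :=
    calc 2 ^ n ≤ (n + 1) * n.choose (n / 2) := two_pow_le_succ_mul_choose_half n
      _ ≤ (n + 1) * (2 * n.choose (n / 2 + 1)) :=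
        Nat.mul_le_mul_left _ (choose_half_le_two_mul_choose_half_succ (by omega))
      _ ≤ (6 * (n - (n / 2 + 1))) * (2 * n.choose (n / 2 + 1)) :=
        Nat.mul_le_mul_right _ (by omega)
      _ = 6 * (2 * (n - (n / 2 + 1)) * n.choose (n / 2 + 1)) := by ring
  rw [influence_threshold_eq, one_div_mul_eq_div, div_le_div_iff₀ (by norm_num) (by positivity)]
  have h' := (Nat.cast_le (α := ℝ)).2 h
  push_cast at h' ⊢
  linarith

open Filter in
lemma eventually_rpow_le_two_pow (C : ℝ) : ∀ᶠ n : ℕ in atTop, (n : ℝ) ^ C ≤ 2 ^ n := by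
  have h := ((isLittleO_rpow_exp_pos_mul_atTop C (Real.log_pos one_lt_two)).comp_tendsto
    tendsto_natCast_atTop_atTop).bound one_pos
  filter_upwards [h] with n hn
  rw [Function.comp_apply, Function.comp_apply, one_mul, ← Real.rpow_def_of_pos two_pos,
    Real.rpow_natCast, Real.norm_of_nonneg (by positivity),
    Real.norm_of_nonneg (by positivity)] at hn
  exact hn

lemma one_div_six_mul_rpow_le_influence_of_isMinimalThreshold {C1 : ℝ} {n θ : ℕ}
    (hC1 : 0 ≤ C1) (hn : 3 ≤ n) (hpow : (n : ℝ) ^ C1 ≤ 2 ^ n)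
    (hθ : isMinimalThreshold C1 n θ) :
    1 / (6 * (n : ℝ) ^ C1) ≤ influence n (fun x => decide (θ < level x)) := by
  obtain ⟨hθ_gt, -, hθ_min⟩ := hθ
  have hR : 1 ≤ (n : ℝ) ^ C1 := Real.one_le_rpow (by exact_mod_cast (by omega : 1 ≤ n)) hC1
  have hθ_half : n / 2 + 1 ≤ θ := by
    have : (n : ℝ) < 2 * θ := by linarith
    have : n < 2 * θ := by exact_mod_cast this
    omega
  obtain rfl | hθ_lt := hθ_half.eq_or_lt
  · calc 1 / (6 * (n : ℝ) ^ C1) ≤ 1 / 6 := by gcongr; linarith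
      _ ≤ _ := one_div_six_le_influence_threshold_half hn
  -- `θ - 1` is still above `n / 2`, so by minimality its tail exceeds `1 / n ^ C1`
  obtain ⟨t, rfl⟩ : ∃ t, θ = t + 1 := ⟨θ - 1, by omega⟩
  have ht_half : (n : ℝ) / 2 < t := by
    have : n < 2 * t := by omega
    have : (n : ℝ) < 2 * t := by exact_mod_cast this
    linarith
  have htail : 1 / (n : ℝ) ^ C1 < tailProb n t := by
    by_contra h
    have := hθ_min t ht_half (not_lt.1 h)
    omega
  have ht : t + 1 < n := by
    by_contra h
    have : tailProb n t ≤ 1 / (n : ℝ) ^ C1 :=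
      (tailProb_le_of_le (by omega)).trans (by gcongr)
    linarith
  calc 1 / (6 * (n : ℝ) ^ C1) ≤ 1 / (n : ℝ) ^ C1 := by gcongr; linarith
    _ ≤ tailProb n t := htail.le
    _ ≤ _ := tailProb_le_influence_threshold_succ (by omega) ht

/-- Fix `C1 ≥ 1`. For all sufficiently large `n`: if `θ` is the smallest integer
greater than `n/2` with `Pr[L(x) > θ] ≤ 1/n^{C1}`, and `f0(x) = 1 ↔ L(x) > θ`,
then `1/(6·n^{C1}) ≤ I[f0] ≤ 2n/n^{C1}`. -/
theorem threshold_influence_bounds (C1 : ℝ) (hC1 : 1 ≤ C1) :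
    ∃ N : ℕ, ∀ n : ℕ, N ≤ n → ∀ θ : ℕ, isMinimalThreshold C1 n θ →
      1 / (6 * (n : ℝ) ^ C1) ≤ influence n (fun x => decide (θ < level x)) ∧
        influence n (fun x => decide (θ < level x)) ≤ 2 * (n : ℝ) / (n : ℝ) ^ C1 := by
  obtain ⟨N, hN⟩ := Filter.eventually_atTop.1
    ((eventually_rpow_le_two_pow C1).and (Filter.eventually_ge_atTop 3))
  refine ⟨N, fun n hn θ hθ => ⟨?_, ?_⟩⟩
  · exact one_div_six_mul_rpow_le_influence_of_isMinimalThreshold (by linarith) (hN n hn).2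
      (hN n hn).1 hθ
  · calc influence n (fun x => decide (θ < level x)) ≤ 2 * n * tailProb n θ :=
          influence_threshold_le n θ
      _ ≤ 2 * n * (1 / (n : ℝ) ^ C1) := by gcongr; exact hθ.2.1
      _ = 2 * (n : ℝ) / (n : ℝ) ^ C1 := mul_one_div _ _
end

section
/- Fix a constant C2 ≥ 0. There exist c > 0 and N such that for all n ≥ N the following holds: let s = ⌊√n⌋ and m = ⌈2^s/n^{C2}⌉; let f be the random DNF with m clauses of width s, i.e., f(x) = 1 iff there is j ∈ [m] with x_i = 1 for all i in the random s-element subset S_j of [n], where S_1, …, S_m are independent and uniform. Then E[I[f]] ≥ c·√n/n^{C2}, where the expectation is over the random choice of S_1, …, S_m. -/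
open Finset

/-- The set of all tuples of `m` clauses, each clause an `s`-element subset of `[n]`. -/
def clauseTuples (n m s : ℕ) : Finset (Fin m → Finset (Fin n)) :=
  Finset.univ.filter (fun S => ∀ j, (S j).card = s)

/-- The DNF determined by the clause tuple `S`: `f(x) = 1` iff there is `j` with
`x_i = 1` for all `i ∈ S j`. -/
def dnfF (n m : ℕ) (S : Fin m → Finset (Fin n)) : (Fin n → Bool) → Bool :=
  fun x => decide (∃ j, ∀ i ∈ S j, x i = true)

/-!
If exactly one clause `S_j` of the DNF is satisfied at `x`, flipping any of the `s` variables
of `S_j` changes `f(x)`, so the sensitivity of `f` at `x` is at least `s`. For `x` of level `k`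
this happens with probability `m p (1 - p)^(m - 1)`, where `p = C(k, s) / C(n, s)`. When
`|2k - n| ≤ 2s` and `s² ≤ n` we have `p = Θ(2^{-s})`, so `m p = Θ(n^{-C2})` and
`(1 - p)^(m - 1) = Ω(1)`. The level of a uniform `x` has variance `n / 4 ≤ s² / 2`, so by
Chebyshev's inequality half of the cube lies in this window, and
`E[I[f]] = E_x E_S[sens_f(x)] ≥ s · Ω(n^{-C2}) / 2 = Ω(√n / n^{C2})`.
-/

def sensitivity {n : ℕ} (f : (Fin n → Bool) → Bool) (x : Fin n → Bool) : ℕ :=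
  #{i | f x ≠ f (Function.update x i (!x i))}

lemma influence_eq_sum_sensitivity (n : ℕ) (f : (Fin n → Bool) → Bool) :
    influence n f = (∑ x, (sensitivity f x : ℝ)) / 2 ^ n := by
  simp only [influence, sensitivity, natCast_card_filter]
  ring

def flipAt {n : ℕ} (i : Fin n) : Equiv.Perm (Fin n → Bool) :=
  Function.Involutive.toPerm (fun x => Function.update x i (!x i)) fun x => by simp

@[simp]
lemma flipAt_apply {n : ℕ} (i : Fin n) (x : Fin n → Bool) :
    flipAt i x = Function.update x i (!x i) := rfl

def spin {n : ℕ} (x : Fin n → Bool) (i : Fin n) : ℤ := if x i then 1 else -1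

lemma sum_spin {n : ℕ} (x : Fin n → Bool) : ∑ i, spin x i = 2 * (level x : ℤ) - n := by
  have h : ∀ i, spin x i = 2 * (if x i = true then 1 else 0) - 1 := by
    intro i; unfold spin; split_ifs <;> norm_num
  simp only [h, sum_sub_distrib, ← mul_sum, ← natCast_card_filter, sum_const, card_univ,
    Fintype.card_fin, level]
  simp

lemma sum_spin_mul_spin_of_ne {n : ℕ} {i j : Fin n} (hij : i ≠ j) :
    ∑ x : Fin n → Bool, spin x i * spin x j = 0 := by
  have hflip : ∀ x, spin (flipAt i x) i * spin (flipAt i x) j = -(spin x i * spin x j) := by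
    intro x
    simp only [flipAt_apply, spin, Function.update_self, Function.update_of_ne hij.symm]
    cases x i <;> cases x j <;> simp
  have := Equiv.sum_comp (flipAt i) fun x => spin x i * spin x j
  simp only [hflip, sum_neg_distrib] at this
  linarith

lemma sum_sq_two_mul_level_sub (n : ℕ) :
    ∑ x : Fin n → Bool, (2 * (level x : ℤ) - n) ^ 2 = (n : ℤ) * 2 ^ n := by
  have hdiag : ∀ (x : Fin n → Bool) i, spin x i * spin x i = 1 := by
    intro x i; unfold spin; split_ifs <;> norm_num
  simp_rw [← sum_spin, sq, sum_mul_sum]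
  rw [sum_comm]
  calc ∑ i, ∑ x : Fin n → Bool, ∑ j, spin x i * spin x j
      = ∑ i : Fin n, ∑ j, ∑ x : Fin n → Bool, spin x i * spin x j :=
        sum_congr rfl fun i _ => sum_comm
    _ = ∑ i : Fin n, (2 : ℤ) ^ n := by
        refine sum_congr rfl fun i _ => ?_
        rw [sum_eq_single i (fun j _ hj => sum_spin_mul_spin_of_ne (Ne.symm hj)) (by simp)]
        simp [hdiag]
    _ = n * 2 ^ n := by simp

lemma two_pow_le_two_mul_card_level_near_half {n s : ℕ} (hn : n ≤ 2 * (s * s)) :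
    2 ^ n ≤ 2 * #{x : Fin n → Bool | |2 * (level x : ℤ) - n| ≤ 2 * s} := by
  set near := #{x : Fin n → Bool | |2 * (level x : ℤ) - n| ≤ 2 * s}
  set far := #{x : Fin n → Bool | ¬ |2 * (level x : ℤ) - n| ≤ 2 * s}
  have htotal : near + far = 2 ^ n := by
    simp only [near, far]
    rw [card_filter_add_card_filter_not]
    simp
  have hfar : (far : ℤ) * (2 * s + 1) ^ 2 ≤ n * 2 ^ n :=
    calc (far : ℤ) * (2 * s + 1) ^ 2
        = ∑ x : Fin n → Bool with ¬ |2 * (level x : ℤ) - n| ≤ 2 * s,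
            (2 * (s : ℤ) + 1) ^ 2 := by
          simp [far]
      _ ≤ ∑ x : Fin n → Bool with ¬ |2 * (level x : ℤ) - n| ≤ 2 * s,
            (2 * (level x : ℤ) - n) ^ 2 := by
          refine sum_le_sum fun x hx => ?_
          rw [← sq_abs (2 * (level x : ℤ) - n)]
          exact pow_le_pow_left₀ (by positivity) (by simpa using (mem_filter.1 hx).2) 2
      _ ≤ ∑ x : Fin n → Bool, (2 * (level x : ℤ) - n) ^ 2 :=
          sum_le_sum_of_subset_of_nonneg (filter_subset _ _) fun _ _ _ => sq_nonneg _
      _ = n * 2 ^ n := sum_sq_two_mul_level_sub n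
  have hn : (n : ℤ) ≤ 2 * (s * s) := by exact_mod_cast hn
  have : (2 : ℤ) * far ≤ 2 ^ n := by
    refine le_of_mul_le_mul_right (a := (2 * (s : ℤ) + 1) ^ 2) ?_ (by positivity)
    calc (2 : ℤ) * far * (2 * (s : ℤ) + 1) ^ 2 ≤ 2 * (2 * (s * s) * 2 ^ n) := by
          rw [mul_assoc]
          exact mul_le_mul_of_nonneg_left
            (hfar.trans (mul_le_mul_of_nonneg_right hn (by positivity))) zero_le_two
      _ ≤ 2 ^ n * (2 * (s : ℤ) + 1) ^ 2 := by
          have h2n : (0 : ℤ) ≤ 2 ^ n := by positivity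
          nlinarith [mul_nonneg (Nat.cast_nonneg (α := ℤ) s) h2n]
  zify at htotal ⊢
  linarith

lemma pow_mul_choose_le_pow_mul_choose (a b s : ℕ) :
    (a + 1 - s) ^ s * b.choose s ≤ b ^ s * a.choose s := by
  refine Nat.le_of_mul_le_mul_left ?_ s.factorial_pos
  calc s.factorial * ((a + 1 - s) ^ s * b.choose s)
      = (a + 1 - s) ^ s * b.descFactorial s := by
        rw [Nat.descFactorial_eq_factorial_mul_choose]; ring
    _ ≤ a.descFactorial s * b ^ s :=
        Nat.mul_le_mul (Nat.pow_sub_le_descFactorial a s) (Nat.descFactorial_le_pow b s)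
    _ = s.factorial * (b ^ s * a.choose s) := by
        rw [Nat.descFactorial_eq_factorial_mul_choose]; ring

lemma exp_neg_two_mul_le_one_sub_pow {x : ℝ} (hx₀ : 0 ≤ x) (hx : x ≤ 1 / 2) (k : ℕ) :
    Real.exp (-(2 * k * x)) ≤ (1 - x) ^ k := by
  have hbase : Real.exp (-(2 * x)) ≤ 1 - x := by
    have h : 1 + 2 * x ≤ Real.exp (2 * x) := by linarith [Real.add_one_le_exp (2 * x)]
    rw [Real.exp_neg, inv_le_iff_one_le_mul₀ (Real.exp_pos _)]
    nlinarith
  calc Real.exp (-(2 * k * x)) = Real.exp (-(2 * x)) ^ k := by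
        rw [← Real.exp_nat_mul]; ring_nf
    _ ≤ (1 - x) ^ k := pow_le_pow_left₀ (Real.exp_nonneg _) hbase k

lemma exp_neg_two_mul_le_sub_div_pow {n s : ℕ} {c : ℝ} (hn : 0 < n) (hc : 0 ≤ c)
    (hsn : s * s ≤ n) (hcs : 2 * c * s ≤ n) :
    Real.exp (-(2 * c)) ≤ ((n - c * s) / n) ^ s := by
  have hn : (0 : ℝ) < n := by exact_mod_cast hn
  have hs : (s : ℝ) * s / n ≤ 1 := (div_le_one hn).2 (by exact_mod_cast hsn)
  rw [sub_div, div_self hn.ne']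
  refine le_trans ?_ (exp_neg_two_mul_le_one_sub_pow (by positivity) ?_ s)
  · refine Real.exp_le_exp.2 (neg_le_neg ?_)
    rw [show 2 * (s : ℝ) * (c * s / n) = 2 * c * (s * s / n) by ring]
    nlinarith
  · rw [div_le_iff₀ hn]; linarith

lemma le_choose_of_le_two_mul_add {n k s : ℕ} (hsn : s * s ≤ n) (h8s : 8 * s ≤ n)
    (hk : n ≤ 2 * k + 2 * s) :
    Real.exp (-8) / 2 ^ s * n.choose s ≤ k.choose s := by
  obtain rfl | hn := n.eq_zero_or_pos
  · obtain rfl : s = 0 := by omega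
    simp
  have hexp : Real.exp (-8) ≤ ((n - 4 * s) / n) ^ s := by
    convert exp_neg_two_mul_le_sub_div_pow (c := 4) hn (by norm_num) hsn
      (by exact_mod_cast h8s) using 2
    norm_num
  have hbase : ((n : ℝ) - 4 * s) / 2 ≤ ((k + 1 - s : ℕ) : ℝ) := by
    have hk : (n : ℝ) ≤ 2 * k + 2 * s := by exact_mod_cast hk
    rw [Nat.cast_sub (by omega)]
    push_cast
    linarith
  have key : (((k + 1 - s : ℕ) : ℝ)) ^ s * n.choose s ≤ (n : ℝ) ^ s * k.choose s := by
    exact_mod_cast pow_mul_choose_le_pow_mul_choose k n s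
  calc Real.exp (-8) / 2 ^ s * n.choose s
      ≤ ((n - 4 * s) / n) ^ s / 2 ^ s * n.choose s := by gcongr
    _ = (((n : ℝ) - 4 * s) / 2) ^ s * n.choose s / (n : ℝ) ^ s := by
        rw [div_pow, div_pow]
        field_simp
    _ ≤ ((k + 1 - s : ℕ) : ℝ) ^ s * n.choose s / (n : ℝ) ^ s := by
        have : (0 : ℝ) ≤ n - 4 * s := by
          rw [sub_nonneg]; exact_mod_cast (by omega : 4 * s ≤ n)
        gcongr
    _ ≤ k.choose s := by rw [div_le_iff₀ (by positivity)]; linarith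

lemma choose_le_of_two_mul_le_add {n k s : ℕ} (hsn : s * s ≤ n) (h6s : 6 * s ≤ n)
    (hk : 2 * k ≤ n + 2 * s) :
    (k.choose s : ℝ) ≤ Real.exp 6 / 2 ^ s * n.choose s := by
  obtain rfl | hn := n.eq_zero_or_pos
  · obtain rfl : s = 0 := by omega
    simp
  have hexp : Real.exp (-6) ≤ ((n - 3 * s) / n) ^ s := by
    convert exp_neg_two_mul_le_sub_div_pow (c := 3) hn (by norm_num) hsn
      (by exact_mod_cast h6s) using 2
    norm_num
  set W : ℝ := ((n + 1 - s : ℕ) : ℝ)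
  have hW : 0 < W := by simp only [W]; exact_mod_cast (by omega : 0 < n + 1 - s)
  have h3s : (0 : ℝ) ≤ n - 3 * s := by
    rw [sub_nonneg]; exact_mod_cast (by omega : 3 * s ≤ n)
  have hbase : (n - 3 * s) / n * (k : ℝ) ≤ W / 2 := by
    have hk : 2 * (k : ℝ) ≤ n + 2 * s := by exact_mod_cast hk
    have hn : (0 : ℝ) < n := by exact_mod_cast hn
    simp only [W]
    rw [Nat.cast_sub (by omega), div_mul_eq_mul_div, div_le_div_iff₀ hn two_pos]
    push_cast
    -- `(n - 3s)(n + 2s) = n² - ns - 6s² ≤ n (n + 1 - s)`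
    nlinarith
  have key : W ^ s * k.choose s ≤ (k : ℝ) ^ s * n.choose s := by
    simp only [W]; exact_mod_cast pow_mul_choose_le_pow_mul_choose n k s
  have main : Real.exp (-6) * k.choose s * W ^ s ≤ n.choose s / 2 ^ s * W ^ s :=
    calc Real.exp (-6) * k.choose s * W ^ s
        = Real.exp (-6) * (W ^ s * k.choose s) := by ring
      _ ≤ ((n - 3 * s) / n) ^ s * (W ^ s * k.choose s) := by gcongr
      _ ≤ ((n - 3 * s) / n) ^ s * ((k : ℝ) ^ s * n.choose s) := by gcongr
      _ = ((n - 3 * s) / n * (k : ℝ)) ^ s * n.choose s := by rw [mul_pow]; ring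
      _ ≤ (W / 2) ^ s * n.choose s := by gcongr
      _ = n.choose s / 2 ^ s * W ^ s := by rw [div_pow]; ring
  calc (k.choose s : ℝ) = Real.exp 6 * (Real.exp (-6) * k.choose s) := by
        rw [← mul_assoc, ← Real.exp_add]; norm_num
    _ ≤ Real.exp 6 * (n.choose s / 2 ^ s) :=
        mul_le_mul_of_nonneg_left (le_of_mul_le_mul_right main (pow_pos hW s))
          (Real.exp_pos 6).le
    _ = Real.exp 6 / 2 ^ s * n.choose s := by ring

lemma mul_exp_neg_le_mul_mul_one_sub_pow {p a b : ℝ} {m : ℕ} (hp₀ : 0 ≤ p)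
    (hp : p ≤ 1 / 2) (ha : a ≤ m * p) (hb : m * p ≤ b) :
    a * Real.exp (-(2 * b)) ≤ m * p * (1 - p) ^ (m - 1) := by
  have hmp : 0 ≤ m * p := by positivity
  calc a * Real.exp (-(2 * b)) ≤ m * p * Real.exp (-(2 * m * p)) := by
        refine mul_le_mul ha (Real.exp_le_exp.2 ?_) (Real.exp_nonneg _) hmp
        linarith
    _ ≤ m * p * (1 - p) ^ m := by gcongr; exact exp_neg_two_mul_le_one_sub_pow hp₀ hp m
    _ ≤ m * p * (1 - p) ^ (m - 1) := by
        exact mul_le_mul_of_nonneg_left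
          (pow_le_pow_of_le_one (by linarith) (by linarith) (Nat.sub_le m 1)) hmp

lemma card_clauseTuples (n m s : ℕ) : #(clauseTuples n m s) = n.choose s ^ m := by
  have : clauseTuples n m s =
      Fintype.piFinset fun _ : Fin m => (univ : Finset (Fin n)).powersetCard s := by
    ext S
    simp [clauseTuples, Fintype.mem_piFinset, mem_powersetCard]
  simp [this, Fintype.card_piFinset, card_powersetCard]

def trueSet {n : ℕ} (x : Fin n → Bool) : Finset (Fin n) := {i | x i = true}

lemma subset_trueSet_iff {n : ℕ} {x : Fin n → Bool} {A : Finset (Fin n)} :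
    A ⊆ trueSet x ↔ ∀ i ∈ A, x i = true := by
  simp [Finset.subset_iff, trueSet]

lemma dnfF_eq_true_iff {n m : ℕ} {S : Fin m → Finset (Fin n)} {x : Fin n → Bool} :
    dnfF n m S x = true ↔ ∃ j, S j ⊆ trueSet x := by
  simp [dnfF, subset_trueSet_iff]

def IsUniqueSatClause {n m : ℕ} (S : Fin m → Finset (Fin n)) (x : Fin n → Bool) (j : Fin m) :
    Prop :=
  S j ⊆ trueSet x ∧ ∀ j' ≠ j, ¬ S j' ⊆ trueSet x

instance {n m : ℕ} (S : Fin m → Finset (Fin n)) (x : Fin n → Bool) (j : Fin m) :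
    Decidable (IsUniqueSatClause S x j) := by
  unfold IsUniqueSatClause; infer_instance

lemma IsUniqueSatClause.eq {n m : ℕ} {S : Fin m → Finset (Fin n)} {x : Fin n → Bool}
    {j j' : Fin m} (h : IsUniqueSatClause S x j) (h' : IsUniqueSatClause S x j') : j' = j := by
  by_contra hne
  exact h.2 j' hne h'.1

lemma IsUniqueSatClause.card_le_sensitivity {n m : ℕ} {S : Fin m → Finset (Fin n)}
    {x : Fin n → Bool} {j : Fin m} (h : IsUniqueSatClause S x j) :
    #(S j) ≤ sensitivity (dnfF n m S) x := by
  refine card_le_card fun i hi => ?_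
  have hxi : x i = true := subset_trueSet_iff.1 h.1 i hi
  have hsat : dnfF n m S x = true := dnfF_eq_true_iff.2 ⟨j, h.1⟩
  suffices dnfF n m S (Function.update x i (!x i)) = false by simp [hsat, this]
  rw [Bool.eq_false_iff, ne_eq, dnfF_eq_true_iff]
  rintro ⟨j', hj'⟩
  have hij' : i ∉ S j' := fun hi' => by simpa [hxi] using subset_trueSet_iff.1 hj' i hi'
  have hj'ne : j' ≠ j := by rintro rfl; exact hij' hi
  refine h.2 j' hj'ne (subset_trueSet_iff.2 fun i' hi' => ?_)
  have := subset_trueSet_iff.1 hj' i' hi'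
  rwa [Function.update_of_ne (by rintro rfl; exact hij' hi')] at this

lemma filter_isUniqueSatClause_eq_piFinset (n m s : ℕ) (x : Fin n → Bool) (j : Fin m) :
    {S ∈ clauseTuples n m s | IsUniqueSatClause S x j}
      = Fintype.piFinset fun j' => if j' = j then (trueSet x).powersetCard s
          else univ.powersetCard s \ (trueSet x).powersetCard s := by
  ext S
  rw [mem_filter, clauseTuples, mem_filter, Fintype.mem_piFinset]
  simp only [IsUniqueSatClause, mem_univ, true_and]
  constructor
  · rintro ⟨hcard, hsat, hunsat⟩ j'
    split_ifs with hj
    · subst hj; exact mem_powersetCard.2 ⟨hsat, hcard j'⟩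
    · exact mem_sdiff.2 ⟨mem_powersetCard.2 ⟨subset_univ _, hcard j'⟩,
        fun hg => hunsat j' hj (mem_powersetCard.1 hg).1⟩
  · intro hS
    refine ⟨fun j' => ?_, ?_, fun j' hj hsat => ?_⟩
    · have := hS j'
      split_ifs at this
      · exact (mem_powersetCard.1 this).2
      · exact (mem_powersetCard.1 (mem_sdiff.1 this).1).2
    · have := hS j
      rw [if_pos rfl] at this
      exact (mem_powersetCard.1 this).1
    · have := hS j'
      rw [if_neg hj, mem_sdiff] at this
      exact this.2 (mem_powersetCard.2 ⟨hsat, (mem_powersetCard.1 this.1).2⟩)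

lemma card_filter_isUniqueSatClause (n m s : ℕ) (x : Fin n → Bool) (j : Fin m) :
    #{S ∈ clauseTuples n m s | IsUniqueSatClause S x j}
      = (level x).choose s * (n.choose s - (level x).choose s) ^ (m - 1) := by
  have hgood : #((trueSet x).powersetCard s) = (level x).choose s := card_powersetCard _ _
  have hbad : #(univ.powersetCard s \ (trueSet x).powersetCard s)
      = n.choose s - (level x).choose s := by
    rw [card_sdiff_of_subset (powersetCard_mono (subset_univ _)), hgood, card_powersetCard,
      card_univ, Fintype.card_fin]
  rw [filter_isUniqueSatClause_eq_piFinset, Fintype.card_piFinset,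
    ← mul_prod_erase univ _ (mem_univ j), if_pos rfl, hgood,
    prod_congr rfl fun j' hj' => by rw [if_neg (ne_of_mem_erase hj')], prod_const, hbad,
    card_erase_of_mem (mem_univ j), card_univ, Fintype.card_fin]

lemma le_sum_sensitivity_dnfF (n m s : ℕ) (x : Fin n → Bool) :
    s * m * ((level x).choose s * (n.choose s - (level x).choose s) ^ (m - 1))
      ≤ ∑ S ∈ clauseTuples n m s, sensitivity (dnfF n m S) x := by
  have hS : ∀ S ∈ clauseTuples n m s,
      s * #{j | IsUniqueSatClause S x j} ≤ sensitivity (dnfF n m S) x := by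
    intro S hS
    rcases Finset.eq_empty_or_nonempty {j | IsUniqueSatClause S x j} with h | ⟨j, hj⟩
    · simp [h]
    · have hj : IsUniqueSatClause S x j := (mem_filter.1 hj).2
      have hone : #{j | IsUniqueSatClause S x j} = 1 :=
        card_eq_one.2 ⟨j, eq_singleton_iff_unique_mem.2
          ⟨mem_filter.2 ⟨mem_univ _, hj⟩, fun j' hj' => hj.eq (mem_filter.1 hj').2⟩⟩
      have hcard : #(S j) = s := (mem_filter.1 hS).2 j
      rw [hone, mul_one, ← hcard]
      exact hj.card_le_sensitivity
  calc s * m * ((level x).choose s * (n.choose s - (level x).choose s) ^ (m - 1))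
      = ∑ S ∈ clauseTuples n m s, s * #{j | IsUniqueSatClause S x j} := by
        simp_rw [card_filter, ← mul_sum]
        rw [sum_comm]
        simp_rw [← card_filter, card_filter_isUniqueSatClause, sum_const, card_univ,
          Fintype.card_fin, smul_eq_mul]
        ring
    _ ≤ _ := sum_le_sum hS

lemma le_sum_sensitivity_dnfF_of_level_near_half {n m s : ℕ} {δ : ℝ} {x : Fin n → Bool}
    (hsn : s * s ≤ n) (h8s : 8 * s ≤ n) (hs : 2 * Real.exp 6 ≤ 2 ^ s) (hδ : 0 < δ)
    (hδm : δ * 2 ^ s ≤ m) (hm : m ≤ 2 ^ s) (hx : |2 * (level x : ℤ) - n| ≤ 2 * s) :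
    s * (δ * Real.exp (-8) * Real.exp (-(2 * Real.exp 6))) * (n.choose s : ℝ) ^ m
      ≤ ∑ S ∈ clauseTuples n m s, (sensitivity (dnfF n m S) x : ℝ) := by
  set k := level x
  set T := n.choose s
  have hk : n ≤ 2 * k + 2 * s ∧ 2 * k ≤ n + 2 * s := by
    rw [abs_le] at hx; omega
  have hkn : k ≤ n := by
    simpa [k, level] using card_le_univ (univ.filter fun i => x i = true)
  have hT : (0 : ℝ) < T := by exact_mod_cast Nat.choose_pos (by nlinarith : s ≤ n)
  have hm₀ : 0 < m := by exact_mod_cast (by positivity : (0 : ℝ) < δ * 2 ^ s).trans_le hδm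
  set p : ℝ := k.choose s / T
  have hp₀ : 0 ≤ p := by positivity
  have hp_low : Real.exp (-8) / 2 ^ s ≤ p :=
    (le_div_iff₀ hT).2 (le_choose_of_le_two_mul_add hsn h8s hk.1)
  have hp_up : p ≤ Real.exp 6 / 2 ^ s :=
    (div_le_iff₀ hT).2 (choose_le_of_two_mul_le_add hsn (by omega) hk.2)
  have h2s : (0 : ℝ) < 2 ^ s := by positivity
  have hmp := mul_exp_neg_le_mul_mul_one_sub_pow (a := δ * Real.exp (-8)) (m := m) hp₀
    (hp_up.trans (by rw [div_le_iff₀ h2s]; linarith))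
    (by
      calc δ * Real.exp (-8) = δ * 2 ^ s * (Real.exp (-8) / 2 ^ s) := by field_simp
        _ ≤ m * p := by gcongr)
    (by
      calc m * p ≤ 2 ^ s * (Real.exp 6 / 2 ^ s) := by gcongr; exact_mod_cast hm
        _ = Real.exp 6 := by field_simp)
  have hcount : (s : ℝ) * m * (k.choose s * ((T - k.choose s : ℕ) : ℝ) ^ (m - 1))
      = s * T ^ m * (m * p * (1 - p) ^ (m - 1)) := by
    obtain ⟨m, rfl⟩ : ∃ m', m = m' + 1 := ⟨m - 1, by omega⟩
    have h1p : 1 - p = ((T : ℝ) - k.choose s) / T := by simp only [p]; field_simp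
    rw [Nat.cast_sub (show k.choose s ≤ T from Nat.choose_le_choose s hkn), Nat.add_sub_cancel,
      h1p, div_pow]
    simp only [p]
    field_simp
    ring
  calc s * (δ * Real.exp (-8) * Real.exp (-(2 * Real.exp 6))) * (T : ℝ) ^ m
      ≤ s * T ^ m * (m * p * (1 - p) ^ (m - 1)) := by
        rw [mul_right_comm]; gcongr
    _ = s * m * (k.choose s * ((T - k.choose s : ℕ) : ℝ) ^ (m - 1)) := hcount.symm
    _ ≤ ∑ S ∈ clauseTuples n m s, (sensitivity (dnfF n m S) x : ℝ) := by
        exact_mod_cast le_sum_sensitivity_dnfF n m s x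

lemma le_expected_influence_dnfF {n m s : ℕ} {δ : ℝ} (hsn : s * s ≤ n) (h8s : 8 * s ≤ n)
    (hn : n ≤ 2 * (s * s)) (hs : 2 * Real.exp 6 ≤ 2 ^ s) (hδ : 0 < δ)
    (hδm : δ * 2 ^ s ≤ m) (hm : m ≤ 2 ^ s) :
    s * (δ * Real.exp (-8) * Real.exp (-(2 * Real.exp 6))) / 2
      ≤ (∑ S ∈ clauseTuples n m s, influence n (dnfF n m S)) / #(clauseTuples n m s) := by
  set c := δ * Real.exp (-8) * Real.exp (-(2 * Real.exp 6))
  have hc : 0 ≤ c := by positivity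
  set near : Finset (Fin n → Bool) := {x : Fin n → Bool | |2 * (level x : ℤ) - n| ≤ 2 * s}
  have hnear : (2 : ℝ) ^ n ≤ 2 * #near := by
    have : 2 ^ n ≤ 2 * #near := two_pow_le_two_mul_card_level_near_half hn
    exact_mod_cast this
  have hT : (0 : ℝ) < (n.choose s : ℝ) ^ m := by
    have : 0 < n.choose s := Nat.choose_pos (by nlinarith)
    positivity
  have hsum : #near * (s * c * (n.choose s : ℝ) ^ m)
      ≤ ∑ x, ∑ S ∈ clauseTuples n m s, (sensitivity (dnfF n m S) x : ℝ) :=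
    calc #near * (s * c * (n.choose s : ℝ) ^ m)
        = ∑ x ∈ near, s * c * (n.choose s : ℝ) ^ m := by rw [sum_const, nsmul_eq_mul]
      _ ≤ ∑ x ∈ near, ∑ S ∈ clauseTuples n m s, (sensitivity (dnfF n m S) x : ℝ) :=
          sum_le_sum fun x hx =>
            le_sum_sensitivity_dnfF_of_level_near_half hsn h8s hs hδ hδm hm (mem_filter.1 hx).2
      _ ≤ _ := sum_le_sum_of_subset_of_nonneg (subset_univ _) fun _ _ _ => by positivity
  simp_rw [card_clauseTuples, influence_eq_sum_sensitivity, ← sum_div]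
  rw [sum_comm, Nat.cast_pow, div_div, le_div_iff₀ (by positivity)]
  calc s * c / 2 * (2 ^ n * (n.choose s : ℝ) ^ m)
      = 2 ^ n * (s * c * (n.choose s : ℝ) ^ m) / 2 := by ring
    _ ≤ 2 * #near * (s * c * (n.choose s : ℝ) ^ m) / 2 := by gcongr
    _ = #near * (s * c * (n.choose s : ℝ) ^ m) := by ring
    _ ≤ _ := hsum

/-- Fix `C2 ≥ 0`. There exist `c > 0` and `N` such that for all `n ≥ N`, with
`s = ⌊√n⌋` and `m = ⌈2^s/n^{C2}⌉`, the random DNF with `m` independent uniformly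
random `s`-element clauses satisfies `E[I[f]] ≥ c·√n/n^{C2}` (the expectation being
the average of `I[f_S]` over all clause tuples `S`). -/
theorem random_dnf_expected_influence (C2 : ℝ) (hC2 : 0 ≤ C2) :
    ∃ c : ℝ, 0 < c ∧ ∃ N : ℕ, ∀ n : ℕ, N ≤ n →
      c * Real.sqrt n / (n : ℝ) ^ C2 ≤
        (∑ S ∈ clauseTuples n ⌈(2 : ℝ) ^ Nat.sqrt n / (n : ℝ) ^ C2⌉₊ (Nat.sqrt n),
            influence n (dnfF n ⌈(2 : ℝ) ^ Nat.sqrt n / (n : ℝ) ^ C2⌉₊ S)) /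
          ((clauseTuples n ⌈(2 : ℝ) ^ Nat.sqrt n / (n : ℝ) ^ C2⌉₊ (Nat.sqrt n)).card : ℝ) := by
  refine ⟨Real.exp (-8) * Real.exp (-(2 * Real.exp 6)) / 4, by positivity, 144, fun n hn => ?_⟩
  set s := Nat.sqrt n
  have hs : 12 ≤ s := Nat.le_sqrt.2 (by omega)
  have hsn : s * s ≤ n := Nat.sqrt_le n
  have hns : n < (s + 1) * (s + 1) := Nat.lt_succ_sqrt n
  have hZ : 1 ≤ (n : ℝ) ^ C2 := Real.one_le_rpow (by exact_mod_cast (by omega : 1 ≤ n)) hC2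
  have hexp : 2 * Real.exp 6 ≤ 2 ^ s :=
    calc 2 * Real.exp 6 ≤ 2 * 3 ^ 6 := by
          rw [show (6 : ℝ) = (6 : ℕ) by norm_num, ← Real.exp_one_pow]
          gcongr
          exact Real.exp_one_lt_three.le
      _ ≤ 2 ^ 12 := by norm_num
      _ ≤ 2 ^ s := pow_le_pow_right₀ one_le_two hs
  have hsqrt : Real.sqrt n ≤ 2 * s := by
    rw [Real.sqrt_le_left (by positivity)]
    exact_mod_cast (by nlinarith : n ≤ (2 * s) ^ 2)
  refine le_trans ?_ (le_expected_influence_dnfF hsn (by nlinarith) (by nlinarith) hexp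
    (inv_pos.2 (by positivity : (0 : ℝ) < n ^ C2)) (by rw [inv_mul_eq_div]; exact Nat.le_ceil _)
    (Nat.ceil_le.2 (by push_cast; exact div_le_self (by positivity) hZ)))
  rw [div_le_iff₀ (by positivity)]
  calc _ ≤ Real.exp (-8) * Real.exp (-(2 * Real.exp 6)) / 4 * (2 * s) := by gcongr
    _ = _ := by field_simp; norm_num
end

section
/- Let n ≥ 1, let α ∈ [0,1] be such that α·2^n is an integer, and let δ ∈ [0,1]. If f is drawn from H^α, then E_{f∼H^α}[NS_δ[f]] = (1 − (1−δ)^n) · 2α · (2^n·(1−α))/(2^n − 1). -/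
open Finset

/-- The support of the distribution `H^α`: all functions `f : {0,1}^n → {0,1}`
with exactly `α·2^n` points mapped to `1`.  Drawing `f ∼ H^α` means drawing `f`
uniformly from this (finite) set. -/
noncomputable def Hset (n : ℕ) (α : ℝ) : Finset ((Fin n → Bool) → Bool) :=
  Finset.univ.filter (fun f =>
    ((Finset.univ.filter (fun x : Fin n → Bool => f x = true)).card : ℝ) = α * 2 ^ n)


/-!
Permutations of the cube `{0,1}^n` preserve `H^α` and act transitively on ordered pairs of
distinct points, so the number `c` of `f ∈ H^α` with `f x ≠ f z` is the same for all `x ≠ z`.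
Counting the triples `(f, x, z)` with `f x ≠ f z` in two ways gives
`c · 2^n (2^n − 1) = |H^α| · 2K (2^n − K)` with `K = α 2^n`. Averaging `NS_δ` over `H^α` therefore
gives `c / |H^α|` times `Pr[x ≠ z] = 1 − (1 − δ)^n`.
-/

section PermutationInvariant

variable {X Y M : Type*} [AddCommMonoid M]

lemma card_filter_comp_perm [Fintype X] (f : X → Bool) (σ : Equiv.Perm X) :
    #{y | f (σ y) = true} = #{y | f y = true} :=
  card_equiv σ (by simp)

lemma exists_perm_apply_eq_of_ne [DecidableEq X] {x z x' z' : X} (hxz : x ≠ z)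
    (hxz' : x' ≠ z') : ∃ σ : Equiv.Perm X, σ x' = x ∧ σ z' = z := by
  set τ := Equiv.swap x' x
  have hτ : τ z' ≠ x := fun h =>
    hxz' (τ.injective (by rw [h]; exact (Equiv.swap_apply_left x' x).symm)).symm
  refine ⟨Equiv.swap (τ z') z * τ, ?_, by simp⟩
  rw [Equiv.Perm.mul_apply, Equiv.swap_apply_left, Equiv.swap_apply_of_ne_of_ne hτ.symm hxz]

lemma sum_comp_perm {H : Finset (X → Y)} (hH : ∀ f ∈ H, ∀ σ : Equiv.Perm X, f ∘ σ ∈ H)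
    (φ : (X → Y) → M) (σ : Equiv.Perm X) : ∑ f ∈ H, φ (f ∘ σ) = ∑ f ∈ H, φ f :=
  sum_nbij' (· ∘ σ) (· ∘ σ.symm) (fun f hf => hH f hf σ) (fun f hf => hH f hf σ.symm)
    (fun f _ => by ext; simp) (fun f _ => by ext; simp) (fun _ _ => rfl)

lemma sum_apply_apply_eq_of_ne [DecidableEq X] {H : Finset (X → Y)}
    (hH : ∀ f ∈ H, ∀ σ : Equiv.Perm X, f ∘ σ ∈ H) (g : Y → Y → M)
    {x z x' z' : X} (hxz : x ≠ z) (hxz' : x' ≠ z') :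
    ∑ f ∈ H, g (f x) (f z) = ∑ f ∈ H, g (f x') (f z') := by
  obtain ⟨σ, rfl, rfl⟩ := exists_perm_apply_eq_of_ne hxz hxz'
  exact sum_comp_perm hH (fun f => g (f x') (f z')) σ

end PermutationInvariant

section DoubleCounting

variable {X : Type*}

lemma sum_sum_mul_ite_eq [Fintype X] [DecidableEq X] (w : X → X → ℝ) (c : ℝ) :
    ∑ x, ∑ z, w x z * (if x = z then 0 else c) = c * (∑ x, ∑ z, w x z - ∑ x, w x x) := by
  have h : ∀ x z, w x z * (if x = z then 0 else c) = c * w x z - if x = z then c * w x z else 0 :=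
    fun x z => by split_ifs <;> ring
  simp only [h, sum_sub_distrib, sum_ite_eq, mem_univ, if_true, ← mul_sum, mul_sub]

lemma sum_sum_boole_ne [Fintype X] (f : X → Bool) :
    ∑ x, ∑ z, (if f x ≠ f z then (1 : ℝ) else 0)
      = 2 * #{x | f x = true} * (Fintype.card X - #{x | f x = true}) := by
  set a : X → ℝ := fun x => if f x = true then 1 else 0
  have h : ∀ x z, (if f x ≠ f z then (1 : ℝ) else 0) = a x + a z - 2 * (a x * a z) := by
    intro x z; cases hx : f x <;> cases hz : f z <;> norm_num [a, hx, hz]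
  have ha : ∑ x, a x = #{x | f x = true} := by simp [a, sum_boole]
  simp only [h, sum_sub_distrib, sum_add_distrib, ← mul_sum, ← sum_mul, sum_const, card_univ,
    ha, nsmul_eq_mul]
  ring

variable {H : Finset (X → Bool)}

lemma sum_boole_ne_eq_ite [DecidableEq X] (hH : ∀ f ∈ H, ∀ σ : Equiv.Perm X, f ∘ σ ∈ H)
    {x₀ z₀ : X} (h₀ : x₀ ≠ z₀) (x z : X) :
    ∑ f ∈ H, (if f x ≠ f z then (1 : ℝ) else 0)
      = if x = z then 0 else ∑ f ∈ H, (if f x₀ ≠ f z₀ then (1 : ℝ) else 0) := by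
  split_ifs with hxz
  · simp [hxz]
  · exact sum_apply_apply_eq_of_ne hH (fun a b => if a ≠ b then (1 : ℝ) else 0) hxz h₀

lemma sum_boole_ne_mul_eq [Fintype X] [DecidableEq X]
    (hH : ∀ f ∈ H, ∀ σ : Equiv.Perm X, f ∘ σ ∈ H) {K : ℝ}
    (hK : ∀ f ∈ H, (#{x | f x = true} : ℝ) = K) {x₀ z₀ : X} (h₀ : x₀ ≠ z₀) :
    (∑ f ∈ H, if f x₀ ≠ f z₀ then (1 : ℝ) else 0)
        * (Fintype.card X * Fintype.card X - Fintype.card X)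
      = #H * (2 * K * (Fintype.card X - K)) := by
  set c := ∑ f ∈ H, if f x₀ ≠ f z₀ then (1 : ℝ) else 0
  calc c * (Fintype.card X * Fintype.card X - Fintype.card X)
      = ∑ x : X, ∑ z : X, 1 * (if x = z then 0 else c) := by
        rw [sum_sum_mul_ite_eq]; simp
    _ = ∑ x, ∑ z, ∑ f ∈ H, (if f x ≠ f z then (1 : ℝ) else 0) := by
        refine sum_congr rfl fun x _ => sum_congr rfl fun z _ => ?_
        rw [one_mul, sum_boole_ne_eq_ite hH h₀]
    _ = ∑ f ∈ H, ∑ x, ∑ z, (if f x ≠ f z then (1 : ℝ) else 0) :=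
        (sum_congr rfl fun _ _ => sum_comm).trans sum_comm
    _ = #H * (2 * K * (Fintype.card X - K)) := by
        rw [sum_congr rfl fun f hf => by rw [sum_sum_boole_ne, hK f hf], sum_const, nsmul_eq_mul]

end DoubleCounting
lemma sum_prod_ite_eq_one {ι : Type*} [Fintype ι] [DecidableEq ι] (δ : ℝ) (x : ι → Bool) :
    ∑ z : ι → Bool, ∏ i, (if z i = x i then 1 - δ else δ) = 1 := by
  rw [← Fintype.prod_sum fun i (b : Bool) => if b = x i then 1 - δ else δ]
  refine prod_eq_one fun i _ => ?_
  cases x i <;> simp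

lemma sum_sum_noisePairProb (n : ℕ) (δ : ℝ) : ∑ x, ∑ z, noisePairProb n δ x z = 1 := by
  simp [noisePairProb, ← mul_sum, sum_prod_ite_eq_one]

lemma sum_noisePairProb_self (n : ℕ) (δ : ℝ) : ∑ x, noisePairProb n δ x x = (1 - δ) ^ n := by
  simp [noisePairProb]

lemma sum_NS_eq_mul {n : ℕ} (δ : ℝ) {H : Finset ((Fin n → Bool) → Bool)} {c : ℝ}
    (hc : ∀ x z, ∑ f ∈ H, (if f x ≠ f z then (1 : ℝ) else 0) = if x = z then 0 else c) :
    ∑ f ∈ H, NS n δ f = c * (1 - (1 - δ) ^ n) := by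
  calc ∑ f ∈ H, NS n δ f
      = ∑ x, ∑ z, noisePairProb n δ x z * (if x = z then 0 else c) := by
        simp only [NS, ← hc, mul_sum]
        exact sum_comm.trans (sum_congr rfl fun _ _ => sum_comm)
    _ = c * (1 - (1 - δ) ^ n) := by
        rw [sum_sum_mul_ite_eq, sum_sum_noisePairProb, sum_noisePairProb_self]

lemma comp_perm_mem_Hset {n : ℕ} {α : ℝ} {f : (Fin n → Bool) → Bool} (hf : f ∈ Hset n α)
    (σ : Equiv.Perm (Fin n → Bool)) : f ∘ σ ∈ Hset n α := by
  simpa [Hset, card_filter_comp_perm] using hf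

lemma Hset_nonempty {n : ℕ} {α : ℝ} {k : ℕ} (hk : (k : ℝ) = α * 2 ^ n) (hα1 : α ≤ 1) :
    (Hset n α).Nonempty := by
  have hk_le : (k : ℝ) ≤ 2 ^ n := by rw [hk]; exact mul_le_of_le_one_left (by positivity) hα1
  obtain ⟨t, -, ht⟩ := exists_subset_card_eq (s := (univ : Finset (Fin n → Bool)))
    (by simpa using (by exact_mod_cast hk_le : k ≤ 2 ^ n))
  exact ⟨(· ∈ t), by simp [Hset, ht, hk]⟩

theorem random_function_expected_ns_general (n : ℕ) (hn : 1 ≤ n) (α : ℝ)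
    (hα1 : α ≤ 1) (hint : ∃ k : ℕ, (k : ℝ) = α * 2 ^ n)
    (δ : ℝ) :
    (∑ f ∈ Hset n α, NS n δ f) / ((Hset n α).card : ℝ)
      = (1 - (1 - δ) ^ n) * (2 * α) * ((2 : ℝ) ^ n * (1 - α)) / ((2 : ℝ) ^ n - 1) := by
  obtain ⟨k, hk⟩ := hint
  let x₀ : Fin n → Bool := fun _ => false
  let z₀ : Fin n → Bool := fun _ => true
  have h₀ : x₀ ≠ z₀ := fun h => by simpa [x₀, z₀] using congrFun h ⟨0, hn⟩
  have hH : ∀ f ∈ Hset n α, ∀ σ : Equiv.Perm _, f ∘ σ ∈ Hset n α :=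
    fun f hf => comp_perm_mem_Hset hf
  have hcount := sum_boole_ne_mul_eq hH (fun f hf => (mem_filter.1 hf).2) h₀
  rw [sum_NS_eq_mul δ (sum_boole_ne_eq_ite hH h₀)]
  have hcard : (#(Hset n α) : ℝ) ≠ 0 := by exact_mod_cast (Hset_nonempty hk hα1).card_pos.ne'
  have hN : (2 : ℝ) ^ n - 1 ≠ 0 := by
    have : (2 : ℝ) ≤ 2 ^ n := le_self_pow₀ one_le_two (by omega)
    linarith
  simp only [Fintype.card_fun, Fintype.card_bool, Fintype.card_fin, Nat.cast_pow,
    Nat.cast_ofNat] at hcount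
  rw [div_eq_div_iff hcard hN]
  refine mul_left_cancel₀ (pow_ne_zero n (two_ne_zero' ℝ)) ?_
  linear_combination (1 - (1 - δ) ^ n) * hcount

/-- Let `n ≥ 1`, let `α ∈ [0,1]` with `α·2^n` an integer, and let `δ ∈ [0,1]`.
Then the expected noise sensitivity of a uniformly random `f ∼ H^α` satisfies
`E[NS_δ[f]] = (1 − (1−δ)^n) · 2α · (2^n·(1−α))/(2^n − 1)`. -/
theorem random_function_expected_ns (n : ℕ) (hn : 1 ≤ n) (α : ℝ)
    (hα0 : 0 ≤ α) (hα1 : α ≤ 1) (hint : ∃ k : ℕ, (k : ℝ) = α * 2 ^ n)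
    (δ : ℝ) (hδ0 : 0 ≤ δ) (hδ1 : δ ≤ 1) :
    (∑ f ∈ Hset n α, NS n δ f) / ((Hset n α).card : ℝ)
      = (1 - (1 - δ) ^ n) * (2 * α) * ((2 : ℝ) ^ n * (1 - α)) / ((2 : ℝ) ^ n - 1) :=
  random_function_expected_ns_general n hn α hα1 hint δ
end

section
/- There exists N such that for all n ≥ N the following holds: for every real α with 0 < α ≤ 1/2 and α·2^n an integer, and every δ ∈ [0,1], the variance of the noise sensitivity over a random function from H^α satisfies Var_{f∼H^α}[NS_δ[f]] ≤ 100·α/2^n. -/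
open Finset

/-!
Write `NS_δ[f] = ∑_{(x,z)} T_δ(x,z) · 1[f x ≠ f z]`. The variance over `f ∼ H^α` is then
`∑_{c,c'} T_δ(c) T_δ(c') · Cov(1[f x ≠ f z], 1[f x' ≠ f z'])`, and with `k = α 2^n` the values of
`f` at a few fixed points are hypergeometrically distributed, so each covariance is explicit:
it is at most `Pr[f x ≠ f z] ≤ 2k/2^n` when the pairs `c, c'` share a point, and at most
`64k/4^n` when the four points are distinct. Both marginals of `T_δ` are uniform, so pairs sharing
a point carry total weight at most `4/2^n`, and the variance is at most `72k/4^n = 72α/2^n`.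
-/

open scoped BigOperators

noncomputable def covOn {Ω : Type*} (S : Finset Ω) (g h : Ω → ℝ) : ℝ :=
  𝔼 ω ∈ S, g ω * h ω - (𝔼 ω ∈ S, g ω) * 𝔼 ω ∈ S, h ω

section Covariance

variable {Ω ι κ : Type*} (S : Finset Ω)

theorem covOn_self (g : Ω → ℝ) :
    covOn S g g = (∑ ω ∈ S, g ω ^ 2) / #S - ((∑ ω ∈ S, g ω) / #S) ^ 2 := by
  simp only [covOn, expect_eq_sum_div_card, sq]

theorem covOn_sum_mul_sum [Fintype ι] [Fintype κ] (v : ι → ℝ) (w : κ → ℝ)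
    (Y : ι → Ω → ℝ) (Z : κ → Ω → ℝ) :
    covOn S (fun ω => ∑ i, v i * Y i ω) (fun ω => ∑ j, w j * Z j ω)
      = ∑ i, ∑ j, v i * w j * covOn S (Y i) (Z j) := by
  simp only [covOn, sum_mul_sum, expect_sum_comm, mul_sub, sum_sub_distrib, ← mul_expect]
  congr 1 <;> refine sum_congr rfl fun i _ => sum_congr rfl fun j _ => ?_
  · rw [mul_expect]; exact expect_congr rfl fun ω _ => by ring
  · ring

theorem covOn_le_expect {g h : Ω → ℝ} (hg : ∀ ω ∈ S, 0 ≤ g ω) (hh₀ : ∀ ω ∈ S, 0 ≤ h ω)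
    (hh₁ : ∀ ω ∈ S, h ω ≤ 1) : covOn S g h ≤ 𝔼 ω ∈ S, g ω := by
  have hprod : 𝔼 ω ∈ S, g ω * h ω ≤ 𝔼 ω ∈ S, g ω :=
    expect_le_expect fun ω hω => mul_le_of_le_one_right (hg ω hω) (hh₁ ω hω)
  have hnonneg : 0 ≤ (𝔼 ω ∈ S, g ω) * 𝔼 ω ∈ S, h ω :=
    mul_nonneg (expect_nonneg hg) (expect_nonneg hh₀)
  rw [covOn]
  linarith

end Covariance

open scoped Nat in
theorem Nat.choose_sub_mul_descFactorial {M k a b : ℕ} (ha : a ≤ k) (hb : k + b ≤ M) :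
    (M - a - b).choose (k - a) * M.descFactorial (a + b)
      = M.choose k * k.descFactorial a * (M - k).descFactorial b := by
  have hpos : 0 < (k - a)! * (M - k - b)! := by positivity
  refine Nat.eq_of_mul_eq_mul_right hpos ?_
  have hsub : M - a - b - (k - a) = M - k - b := by omega
  calc (M - a - b).choose (k - a) * M.descFactorial (a + b) * ((k - a)! * (M - k - b)!)
      = ((M - a - b).choose (k - a) * (k - a)! * (M - a - b - (k - a))!)
          * M.descFactorial (a + b) := by rw [hsub]; ring
    _ = M ! := by
      rw [Nat.choose_mul_factorial_mul_factorial (by omega), Nat.sub_sub,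
        Nat.factorial_mul_descFactorial (by omega)]
    _ = M.choose k * k ! * (M - k)! := (Nat.choose_mul_factorial_mul_factorial (by omega)).symm
    _ = M.choose k * k.descFactorial a * (M - k).descFactorial b * ((k - a)! * (M - k - b)!) := by
      rw [← Nat.factorial_mul_descFactorial ha,
        ← Nat.factorial_mul_descFactorial (by omega : b ≤ M - k)]
      ring

theorem hypergeometric_cov_le {x y : ℝ} (hx : 0 ≤ x) (hxy : x ≤ y) (hy : 4 ≤ y) :
    4 * (x * (x - 1) * ((y - x) * (y - x - 1))) / (y * (y - 1) * ((y - 2) * (y - 3)))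
        - 2 * x * (y - x) / (y * (y - 1)) * (2 * x * (y - x) / (y * (y - 1)))
      ≤ 64 * x / y ^ 2 := by
  set E := (y - 1) ^ 2 * (y - 2) * (y - 3) with hE
  have hEpos : 0 < E := mul_pos (mul_pos (by nlinarith) (by linarith)) (by linarith)
  -- the terms of order `x² (y - x)²` cancel
  have hlhs : 4 * (x * (x - 1) * ((y - x) * (y - x - 1))) / (y * (y - 1) * ((y - 2) * (y - 3)))
        - 2 * x * (y - x) / (y * (y - 1)) * (2 * x * (y - x) / (y * (y - 1)))
      = 4 * x * ((y - x) * (x * (y - x) * (4 * y - 6) - y * (y - 1) ^ 2)) / (y ^ 2 * E) := by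
    have h1 : y - 1 ≠ 0 := by linarith
    have h2 : y - 2 ≠ 0 := by linarith
    have h3 : y - 3 ≠ 0 := by linarith
    rw [hE]
    field_simp
    ring
  have hrhs : 64 * x / y ^ 2 = 4 * x * (16 * E) / (y ^ 2 * E) := by
    field_simp
    ring
  rw [hlhs, hrhs]
  have hamgm : x * (y - x) ≤ y ^ 2 / 4 := by nlinarith [sq_nonneg (2 * x - y)]
  have hbracket : x * (y - x) * (4 * y - 6) - y * (y - 1) ^ 2 ≤ y ^ 2 / 2 := by nlinarith
  have hprod : (y - x) * (x * (y - x) * (4 * y - 6) - y * (y - 1) ^ 2) ≤ y ^ 3 / 2 := by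
    rcases le_total 0 (x * (y - x) * (4 * y - 6) - y * (y - 1) ^ 2) with h | h
    · nlinarith
    · nlinarith
  have hcubic : y ^ 3 / 2 ≤ 16 * E := by
    have ht : 0 ≤ y - 4 := by linarith
    nlinarith [mul_nonneg ht ht, pow_nonneg ht 3, pow_nonneg ht 4]
  gcongr ?_ / _
  exact mul_le_mul_of_nonneg_left (hprod.trans hcubic) (by linarith)

def fixedWeight (X : Type*) [Fintype X] [DecidableEq X] (k : ℕ) : Finset (X → Bool) :=
  univ.filter fun f => #(univ.filter fun x => f x = true) = k

noncomputable def patternInd {X : Type*} (A B : Finset X) (f : X → Bool) : ℝ :=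
  if (∀ a ∈ A, f a = true) ∧ ∀ b ∈ B, f b = false then 1 else 0

noncomputable def disagree {X : Type*} (x z : X) (f : X → Bool) : ℝ :=
  if f x ≠ f z then 1 else 0

noncomputable def pairOverlap {X : Type*} [DecidableEq X] (c c' : X × X) : ℝ :=
  (if c.1 = c'.1 then 1 else 0) + (if c.1 = c'.2 then 1 else 0)
    + (if c.2 = c'.1 then 1 else 0) + (if c.2 = c'.2 then 1 else 0)

theorem disagree_eq_add {X : Type*} (x z : X) (f : X → Bool) :
    disagree x z f = patternInd {x} {z} f + patternInd {z} {x} f := by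
  unfold disagree patternInd
  cases hx : f x <;> cases hz : f z <;> simp [hx, hz]

theorem disagree_mul_disagree {X : Type*} [DecidableEq X] (x z x' z' : X) (f : X → Bool) :
    disagree x z f * disagree x' z' f
      = patternInd {x, x'} {z, z'} f + patternInd {x, z'} {z, x'} f
        + patternInd {z, x'} {x, z'} f + patternInd {z, z'} {x, x'} f := by
  unfold disagree patternInd
  cases hx : f x <;> cases hz : f z <;> cases hx' : f x' <;> cases hz' : f z' <;>
    simp [hx, hz, hx', hz']

section FixedWeight

variable {X : Type*} [Fintype X] [DecidableEq X] {k : ℕ}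

theorem card_fixedWeight_filter_pattern {A B : Finset X} (hAB : Disjoint A B) (hA : #A ≤ k) :
    #{f ∈ fixedWeight X k | (∀ a ∈ A, f a = true) ∧ ∀ b ∈ B, f b = false}
      = (Fintype.card X - #A - #B).choose (k - #A) := by
  have hcompl : #(A ∪ B)ᶜ = Fintype.card X - #A - #B := by
    rw [card_compl, card_union_of_disjoint hAB, Nat.sub_sub]
  rw [← hcompl, ← card_powersetCard]
  refine card_nbij' (fun f => univ.filter (fun x => f x = true) \ A)
    (fun s x => decide (x ∈ s ∨ x ∈ A)) ?_ ?_ ?_ ?_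
  · intro f hf
    simp only [fixedWeight, mem_coe, mem_filter, mem_univ, true_and] at hf
    obtain ⟨hcard, hAf, hBf⟩ := hf
    simp only [mem_coe, mem_powersetCard]
    refine ⟨fun x hx => ?_, ?_⟩
    · simp only [mem_sdiff, mem_filter, mem_univ, true_and] at hx
      simp only [mem_compl, mem_union, not_or]
      exact ⟨hx.2, fun hxB => by simp [hBf x hxB] at hx⟩
    · rw [card_sdiff_of_subset (fun a ha => by simpa using hAf a ha), hcard]
  · intro s hs
    simp only [mem_coe, mem_powersetCard, subset_iff, mem_compl, mem_union, not_or] at hs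
    obtain ⟨hsAB, hcard⟩ := hs
    have hsA : Disjoint s A := disjoint_left.2 fun x hx => (hsAB hx).1
    simp only [fixedWeight, mem_coe, mem_filter, mem_univ, true_and, decide_eq_true_eq]
    refine ⟨?_, fun a ha => Or.inr ha, fun b hb => ?_⟩
    · have hunion : ({x | x ∈ s ∨ x ∈ A} : Finset X) = s ∪ A := by ext; simp
      rw [hunion, card_union_of_disjoint hsA, hcard]
      omega
    · have hbA : b ∉ A := disjoint_right.1 hAB hb
      have hbs : b ∉ s := fun hbs => (hsAB hbs).2 hb
      simp [hbA, hbs]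
  · intro f hf
    simp only [fixedWeight, mem_coe, mem_filter, mem_univ, true_and] at hf
    funext x
    by_cases hx : x ∈ A <;> simp [hx, hf.2.1]
  · intro s hs
    simp only [mem_coe, mem_powersetCard, subset_iff, mem_compl, mem_union, not_or] at hs
    ext x
    simp only [mem_sdiff, mem_filter, mem_univ, true_and, decide_eq_true_eq]
    exact ⟨fun h => h.1.resolve_right h.2, fun hxs => ⟨Or.inl hxs, (hs.1 hxs).1⟩⟩

theorem card_fixedWeight (k : ℕ) : #(fixedWeight X k) = (Fintype.card X).choose k := by
  simpa using
    card_fixedWeight_filter_pattern (X := X) (k := k) (disjoint_empty_left ∅) (Nat.zero_le k)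

theorem card_fixedWeight_filter_pattern_mul_descFactorial (k : ℕ) {A B : Finset X}
    (hAB : Disjoint A B) :
    #{f ∈ fixedWeight X k | (∀ a ∈ A, f a = true) ∧ ∀ b ∈ B, f b = false}
        * (Fintype.card X).descFactorial (#A + #B)
      = #(fixedWeight X k) * k.descFactorial #A * (Fintype.card X - k).descFactorial #B := by
  by_cases hA : #A ≤ k
  swap
  · have hempty : {f ∈ fixedWeight X k | (∀ a ∈ A, f a = true) ∧ ∀ b ∈ B, f b = false} = ∅ := by
      refine filter_eq_empty_iff.2 fun f hf hpat => hA ?_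
      simp only [fixedWeight, mem_filter, mem_univ, true_and] at hf
      exact hf ▸ card_le_card fun a ha => by simpa using hpat.1 a ha
    rw [hempty, Nat.descFactorial_eq_zero_iff_lt.2 (not_le.1 hA)]
    simp
  rw [card_fixedWeight_filter_pattern hAB hA, card_fixedWeight]
  by_cases hb : k + #B ≤ Fintype.card X
  · exact Nat.choose_sub_mul_descFactorial hA hb
  · have hcard : #A + #B ≤ Fintype.card X := card_union_of_disjoint hAB ▸ card_le_univ _
    rw [Nat.choose_eq_zero_of_lt (by omega : Fintype.card X - #A - #B < k - #A)]
    rcases le_or_gt k (Fintype.card X) with hk | hk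
    · rw [Nat.descFactorial_eq_zero_iff_lt.2 (by omega : Fintype.card X - k < #B)]
      simp
    · simp [Nat.choose_eq_zero_of_lt hk]

theorem expect_fixedWeight_patternInd (hk : k ≤ Fintype.card X) {A B : Finset X}
    (hAB : Disjoint A B) :
    𝔼 f ∈ fixedWeight X k, patternInd A B f
      = k.descFactorial #A * (Fintype.card X - k).descFactorial #B
          / (Fintype.card X).descFactorial (#A + #B) := by
  have hS : (#(fixedWeight X k) : ℝ) ≠ 0 := by
    rw [card_fixedWeight]; exact_mod_cast (Nat.choose_pos hk).ne'
  have hD : ((Fintype.card X).descFactorial (#A + #B) : ℝ) ≠ 0 := by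
    exact_mod_cast (Nat.descFactorial_pos.2 (card_union_of_disjoint hAB ▸ card_le_univ _)).ne'
  rw [expect_eq_sum_div_card, div_eq_div_iff hS hD]
  have hcount := congrArg (Nat.cast (R := ℝ))
    (card_fixedWeight_filter_pattern_mul_descFactorial k hAB)
  rw [card_filter] at hcount
  push_cast at hcount
  simp only [patternInd]
  -- the two sides differ only in the `Decidable` instance of the pattern
  convert hcount.trans (mul_rotate _ _ _)

theorem expect_fixedWeight_disagree (hk : k ≤ Fintype.card X) {x z : X} (hxz : x ≠ z) :
    𝔼 f ∈ fixedWeight X k, disagree x z f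
      = 2 * k * (Fintype.card X - k) / (Fintype.card X * (Fintype.card X - 1)) := by
  simp only [disagree_eq_add, expect_add_distrib,
    expect_fixedWeight_patternInd hk (disjoint_singleton.2 hxz),
    expect_fixedWeight_patternInd hk (disjoint_singleton.2 hxz.symm),
    card_singleton, Nat.descFactorial_one, Nat.cast_sub hk]
  rw [Nat.cast_descFactorial_two]
  ring

theorem expect_fixedWeight_disagree_le (hk : k ≤ Fintype.card X) (x z : X) :
    𝔼 f ∈ fixedWeight X k, disagree x z f ≤ 2 * k / Fintype.card X := by
  by_cases hxz : x = z
  · subst hxz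
    simp only [disagree, ne_eq, not_true_eq_false, if_false, expect_const_zero]
    positivity
  have hM : (2 : ℝ) ≤ Fintype.card X := by
    exact_mod_cast (card_pair hxz).symm.trans_le (card_le_univ _)
  rw [expect_fixedWeight_disagree hk hxz, div_le_div_iff₀ (by nlinarith) (by linarith)]
  have hk₂ : 0 ≤ (k : ℝ) * (k - 1) := Nat.cast_descFactorial_two ℝ k ▸ Nat.cast_nonneg _
  nlinarith [mul_nonneg hk₂ (by linarith : (0 : ℝ) ≤ Fintype.card X)]

theorem expect_fixedWeight_patternInd_pair (hk : k ≤ Fintype.card X) {a a' b b' : X}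
    (h : [a, a', b, b'].Nodup) :
    𝔼 f ∈ fixedWeight X k, patternInd {a, a'} {b, b'} f
      = k * (k - 1) * ((Fintype.card X - k) * (Fintype.card X - k - 1))
        / (Fintype.card X * (Fintype.card X - 1)
          * ((Fintype.card X - 2) * (Fintype.card X - 3))) := by
  have h4 : 4 ≤ Fintype.card X := h.length_le_card
  simp only [List.nodup_cons, List.mem_cons, List.not_mem_nil, not_or] at h
  have hdisj : Disjoint ({a, a'} : Finset X) {b, b'} := by simp [h, eq_comm]
  rw [expect_fixedWeight_patternInd hk hdisj, card_pair h.1.1, card_pair h.2.2.1.1,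
    ← Nat.descFactorial_mul_descFactorial (by norm_num : 2 ≤ 4)]
  push_cast [Nat.cast_descFactorial_two, Nat.cast_sub hk,
    Nat.cast_sub (by omega : 2 ≤ Fintype.card X)]
  ring

theorem expect_fixedWeight_disagree_mul_disagree (hk : k ≤ Fintype.card X)
    {x z x' z' : X} (h : [x, z, x', z'].Nodup) :
    𝔼 f ∈ fixedWeight X k, disagree x z f * disagree x' z' f
      = 4 * (k * (k - 1) * ((Fintype.card X - k) * (Fintype.card X - k - 1)))
        / (Fintype.card X * (Fintype.card X - 1)
          * ((Fintype.card X - 2) * (Fintype.card X - 3))) := by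
  simp only [List.nodup_cons, List.mem_cons, List.not_mem_nil, not_or] at h
  simp only [disagree_mul_disagree, expect_add_distrib]
  rw [expect_fixedWeight_patternInd_pair hk (by simp [*, eq_comm]),
    expect_fixedWeight_patternInd_pair hk (by simp [*, eq_comm]),
    expect_fixedWeight_patternInd_pair hk (by simp [*, eq_comm]),
    expect_fixedWeight_patternInd_pair hk (by simp [*, eq_comm])]
  ring

theorem covOn_fixedWeight_disagree_le (hk : k ≤ Fintype.card X) (c c' : X × X) :
    covOn (fixedWeight X k) (disagree c.1 c.2) (disagree c'.1 c'.2)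
      ≤ 2 * k / Fintype.card X * pairOverlap c c' + 64 * k / Fintype.card X ^ 2 := by
  obtain ⟨x, z⟩ := c
  obtain ⟨x', z'⟩ := c'
  have hoverlap : 0 ≤ pairOverlap (x, z) (x', z') := by unfold pairOverlap; positivity
  have hquad : 0 ≤ 64 * (k : ℝ) / Fintype.card X ^ 2 := by positivity
  by_cases hshare : x = x' ∨ x = z' ∨ z = x' ∨ z = z'
  · have hone : 1 ≤ pairOverlap (x, z) (x', z') := by
      unfold pairOverlap
      rcases hshare with h | h | h | h <;> simp only [h, if_true] <;> split_ifs <;> norm_num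
    have hdis : ∀ (p q : X) f, 0 ≤ disagree p q f ∧ disagree p q f ≤ 1 := fun p q f => by
      unfold disagree; split_ifs <;> norm_num
    calc covOn (fixedWeight X k) (disagree x z) (disagree x' z')
        ≤ 𝔼 f ∈ fixedWeight X k, disagree x z f :=
          covOn_le_expect _ (fun f _ => (hdis x z f).1) (fun f _ => (hdis x' z' f).1)
            fun f _ => (hdis x' z' f).2
      _ ≤ 2 * k / Fintype.card X := expect_fixedWeight_disagree_le hk x z
      _ ≤ _ := le_add_of_le_of_nonneg (le_mul_of_one_le_right (by positivity) hone) hquad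
  by_cases hxz : x = z
  · subst hxz
    simpa [covOn, disagree] using add_nonneg (by positivity) hquad
  by_cases hxz' : x' = z'
  · subst hxz'
    simpa [covOn, disagree] using add_nonneg (by positivity) hquad
  have hnodup : [x, z, x', z'].Nodup := by
    simp only [List.nodup_cons, List.mem_cons, List.not_mem_nil, List.nodup_nil, or_false, not_or,
      and_true]
    tauto
  have h4 : (4 : ℝ) ≤ Fintype.card X := by exact_mod_cast hnodup.length_le_card
  have hcov := hypergeometric_cov_le (Nat.cast_nonneg k) (Nat.cast_le.2 hk) h4
  rw [covOn, expect_fixedWeight_disagree_mul_disagree hk hnodup, expect_fixedWeight_disagree hk hxz,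
    expect_fixedWeight_disagree hk hxz']
  exact hcov.trans (le_add_of_nonneg_left (mul_nonneg (by positivity) hoverlap))

end FixedWeight

theorem sum_sum_mul_pairOverlap_add {X : Type*} [Fintype X] [DecidableEq X] [Nonempty X]
    (w : X → X → ℝ) (hw₁ : ∀ x, ∑ z, w x z = 1 / Fintype.card X)
    (hw₂ : ∀ z, ∑ x, w x z = 1 / Fintype.card X) (a b : ℝ) :
    ∑ c : X × X, ∑ c' : X × X, w c.1 c.2 * w c'.1 c'.2 * (a * pairOverlap c c' + b)
      = 4 * a / Fintype.card X + b := by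
  have hmass : ∑ c : X × X, w c.1 c.2 = 1 := by
    rw [Fintype.sum_prod_type]
    simp only [hw₁, sum_const, card_univ, nsmul_eq_mul]
    field_simp
  have hfst : ∀ t, ∑ c' : X × X, w c'.1 c'.2 * (if t = c'.1 then 1 else 0) = 1 / Fintype.card X :=
    fun t => by simp [Fintype.sum_prod_type, hw₁]
  have hsnd : ∀ t, ∑ c' : X × X, w c'.1 c'.2 * (if t = c'.2 then 1 else 0) = 1 / Fintype.card X :=
    fun t => by simp [Fintype.sum_prod_type, hw₂]
  have hinner : ∀ c : X × X, ∑ c' : X × X, w c.1 c.2 * w c'.1 c'.2 * (a * pairOverlap c c' + b)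
      = w c.1 c.2 * (4 * a / Fintype.card X + b) := by
    intro c
    have hexpand : ∀ c' : X × X, w c.1 c.2 * w c'.1 c'.2 * (a * pairOverlap c c' + b)
        = w c.1 c.2 * (a * (w c'.1 c'.2 * (if c.1 = c'.1 then 1 else 0)
            + w c'.1 c'.2 * (if c.1 = c'.2 then 1 else 0)
            + w c'.1 c'.2 * (if c.2 = c'.1 then 1 else 0)
            + w c'.1 c'.2 * (if c.2 = c'.2 then 1 else 0)) + b * w c'.1 c'.2) := fun c' => by
      unfold pairOverlap; ring
    simp only [hexpand, ← mul_sum, sum_add_distrib, hfst, hsnd, hmass]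
    ring
  rw [sum_congr rfl fun c _ => hinner c, ← sum_mul, hmass, one_mul]

section Noise

variable {n : ℕ} {δ : ℝ}

theorem noisePairProb_nonneg (hδ₀ : 0 ≤ δ) (hδ₁ : δ ≤ 1) (x z : Fin n → Bool) :
    0 ≤ noisePairProb n δ x z := by
  unfold noisePairProb
  exact mul_nonneg (by positivity) (prod_nonneg fun i _ => by split_ifs <;> linarith)

theorem noisePairProb_comm (x z : Fin n → Bool) :
    noisePairProb n δ x z = noisePairProb n δ z x := by
  simp only [noisePairProb, eq_comm]

theorem sum_noisePairProb_right (x : Fin n → Bool) :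
    ∑ z, noisePairProb n δ x z = 1 / 2 ^ n := by
  have hcoord : ∀ i, ∑ b : Bool, (if b = x i then 1 - δ else δ) = 1 := fun i => by
    cases x i <;> simp
  simp only [noisePairProb]
  rw [← mul_sum, ← Fintype.prod_sum (fun i b => if b = x i then 1 - δ else δ)]
  simp only [hcoord, prod_const_one, mul_one]

theorem sum_noisePairProb_left (z : Fin n → Bool) :
    ∑ x, noisePairProb n δ x z = 1 / 2 ^ n := by
  simpa only [noisePairProb_comm] using sum_noisePairProb_right z

theorem NS_eq_sum (f : (Fin n → Bool) → Bool) :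
    NS n δ f
      = ∑ c : (Fin n → Bool) × (Fin n → Bool), noisePairProb n δ c.1 c.2 * disagree c.1 c.2 f := by
  rw [NS, Fintype.sum_prod_type]
  rfl

end Noise

theorem Hset_eq_fixedWeight {n k : ℕ} {α : ℝ} (hk : (k : ℝ) = α * 2 ^ n) :
    Hset n α = fixedWeight (Fin n → Bool) k := by
  ext f
  simp only [Hset, fixedWeight, mem_filter, mem_univ, true_and, ← hk, Nat.cast_inj]

/-- For all sufficiently large `n`: for every real `α` with `0 < α ≤ 1/2` and
`α·2^n` an integer, and every `δ ∈ [0,1]`, the variance of `NS_δ[f]` over a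
uniformly random `f ∼ H^α` is at most `100·α/2^n`. -/
theorem random_function_ns_variance :
    ∃ N : ℕ, ∀ n : ℕ, N ≤ n →
      ∀ α : ℝ, 0 < α → α ≤ 1 / 2 → (∃ k : ℕ, (k : ℝ) = α * 2 ^ n) →
      ∀ δ : ℝ, 0 ≤ δ → δ ≤ 1 →
        (∑ f ∈ Hset n α, (NS n δ f) ^ 2) / ((Hset n α).card : ℝ)
            - ((∑ f ∈ Hset n α, NS n δ f) / ((Hset n α).card : ℝ)) ^ 2
          ≤ 100 * α / 2 ^ n := by
  refine ⟨0, fun n _ α hα₀ hα₁ ⟨k, hk⟩ δ hδ₀ hδ₁ => ?_⟩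
  set M := Fintype.card (Fin n → Bool)
  have hM : (M : ℝ) = 2 ^ n := by simp [M]
  have hkM : k ≤ M := by
    have : (k : ℝ) ≤ M := by rw [hM, hk]; nlinarith [pow_pos (two_pos : (0 : ℝ) < 2) n]
    exact_mod_cast this
  rw [Hset_eq_fixedWeight hk, ← covOn_self, funext NS_eq_sum, covOn_sum_mul_sum]
  calc _ ≤ ∑ c, ∑ c', noisePairProb n δ c.1 c.2 * noisePairProb n δ c'.1 c'.2
          * (2 * (k : ℝ) / M * pairOverlap c c' + 64 * (k : ℝ) / (M : ℝ) ^ 2) := by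
        gcongr with c _ c' _
        · exact mul_nonneg (noisePairProb_nonneg hδ₀ hδ₁ _ _) (noisePairProb_nonneg hδ₀ hδ₁ _ _)
        · exact covOn_fixedWeight_disagree_le hkM c c'
    _ = 4 * (2 * (k : ℝ) / M) / M + 64 * (k : ℝ) / (M : ℝ) ^ 2 :=
        sum_sum_mul_pairOverlap_add _ (hM ▸ sum_noisePairProb_right)
          (hM ▸ sum_noisePairProb_left) _ _
    _ ≤ 100 * α / 2 ^ n := by
        rw [hM, hk]
        field_simp
        nlinarith [pow_pos (two_pos : (0 : ℝ) < 2) n]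
end

section
/- Let n ≥ 1 and w ≥ 1 be integers. Consider the random descending walk: pick x uniformly at random from {0,1}^n; then repeat w times (stopping early if the all-zeros point is reached): pick a uniformly random coordinate of the current point that equals 1 and set it to 0. Let e = (v1, v2) be a fixed hypercube edge with v2 ≺ v1 and L(v1) = ℓ ≥ 1. Then the probability that the walk traverses the edge e (i.e., at some step moves from v1 to v2) equals (Σ_{j=ℓ}^{ℓ+w−1} binom(n, j)) / (2^n · ℓ · binom(n, ℓ)), where binom(n, j) = 0 for j > n. -/
/-!
From a point with support `S ⊇ A`, where `A` is the support of `v1`, the walk visits `v1` exactly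
when its first `#S - #A` deletions are the coordinates of `S \ A`, which happens with probability
`1 / C(#S, #A)` and needs `#S - #A < w`; from `v1` the edge is then taken with probability
`1 / #A`. This closed form satisfies the recursion defining `hitProb` because
`k * C(k - 1, ℓ) = (k - ℓ) * C(k, ℓ)`. Averaging over the start point, `A` has `C(n - ℓ, j - ℓ)`
supersets of size `j`, and `C(n - ℓ, j - ℓ) / C(j, ℓ) = C(n, j) / C(n, ℓ)`.
-/

open Finset

/-- `hitProb n v1 v2 w v` is the probability that the random descending walk of
(at most) `w` steps started at `v` traverses the edge from `v1` to `v2`.  At each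
step a uniformly random coordinate of the current point that equals `1` is set to
`0`; the walk stops early at the all-zeros point. -/
noncomputable def hitProb (n : ℕ) (v1 v2 : Fin n → Bool) :
    ℕ → (Fin n → Bool) → ℝ
  | 0, _ => 0
  | w + 1, v =>
    if (Finset.univ.filter (fun i => v i = true)).card = 0 then 0
    else
      (1 / ((Finset.univ.filter (fun i => v i = true)).card : ℝ)) *
        ∑ i ∈ Finset.univ.filter (fun i => v i = true),
          (if v = v1 ∧ Function.update v i false = v2 then (1 : ℝ)
           else hitProb n v1 v2 w (Function.update v i false))

theorem Nat.mul_choose_pred_eq (k ℓ : ℕ) : k * (k - 1).choose ℓ = (k - ℓ) * k.choose ℓ := by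
  cases k with
  | zero => simp
  | succ m => rw [Nat.add_sub_cancel, mul_comm, Nat.choose_mul_succ_eq, mul_comm]

section Formula

variable {α : Type*} [DecidableEq α]

/-- The value of `hitProb` at a point with support `S`, for the edge leaving the point with
support `A`. -/
noncomputable def hitProbFormula (A S : Finset α) (w : ℕ) : ℝ :=
  if A ⊆ S ∧ #S < #A + w then ((#A : ℝ) * (#S).choose #A)⁻¹ else 0

theorem hitProbFormula_eq_zero_of_not_subset {A S : Finset α} (h : ¬A ⊆ S) (w : ℕ) :
    hitProbFormula A S w = 0 :=
  if_neg fun h' => h h'.1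

theorem hitProbFormula_self (A : Finset α) (w : ℕ) :
    hitProbFormula A A (w + 1) = (#A : ℝ)⁻¹ := by
  simp [hitProbFormula]

theorem sum_hitProbFormula_erase_of_ssubset {A S : Finset α} (hAS : A ⊂ S) (w : ℕ) :
    ∑ j ∈ S, hitProbFormula A (S.erase j) w
      = (#S - #A : ℕ) * if #S < #A + (w + 1) then ((#A : ℝ) * (#S - 1).choose #A)⁻¹ else 0 := by
  have hterm : ∀ j ∈ S, hitProbFormula A (S.erase j) w
      = if j ∈ S \ A then if #S < #A + (w + 1) then ((#A : ℝ) * (#S - 1).choose #A)⁻¹ else 0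
        else 0 := by
    intro j hj
    have hlt : #S - 1 < #A + w ↔ #S < #A + (w + 1) := by
      have := card_lt_card hAS
      omega
    simp only [hitProbFormula, subset_erase, card_erase_of_mem hj, mem_sdiff, hj, true_and,
      hAS.subset, hlt, ite_and]
  rw [sum_congr rfl hterm, sum_ite_mem, inter_eq_right.mpr sdiff_subset, sum_const,
    card_sdiff_of_subset hAS.subset, nsmul_eq_mul]

theorem hitProbFormula_succ_of_ssubset {A S : Finset α} (hAS : A ⊂ S) (w : ℕ) :
    (#S : ℝ)⁻¹ * ∑ j ∈ S, hitProbFormula A (S.erase j) w = hitProbFormula A S (w + 1) := by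
  rw [sum_hitProbFormula_erase_of_ssubset hAS, hitProbFormula,
    if_congr (and_iff_right hAS.subset) rfl rfl]
  split_ifs
  · have hSA : ((#S - #A : ℕ) : ℝ) ≠ 0 := by
      have := card_lt_card hAS
      exact_mod_cast (Nat.sub_pos_of_lt this).ne'
    have key : (#S * (#S - 1).choose #A : ℝ) = (#S - #A : ℕ) * (#S).choose #A := by
      exact_mod_cast Nat.mul_choose_pred_eq #S #A
    calc (#S : ℝ)⁻¹ * ((#S - #A : ℕ) * ((#A : ℝ) * (#S - 1).choose #A)⁻¹)
        = (#A : ℝ)⁻¹ * ((#S - #A : ℕ) / (#S * (#S - 1).choose #A)) := by ring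
      _ = ((#A : ℝ) * (#S).choose #A)⁻¹ := by rw [key, div_mul_cancel_left₀ hSA, mul_inv]
  · simp

end Formula

section Counting

variable {α : Type*} [Fintype α] [DecidableEq α]

theorem card_filter_subset_card_eq (A : Finset α) {j : ℕ} (hj : #A ≤ j) :
    #{S : Finset α | A ⊆ S ∧ #S = j} = (Fintype.card α - #A).choose (j - #A) := by
  rw [← card_univ, ← card_filter_powersetCard_subset A univ j (subset_univ A) hj]
  congr 1
  ext S
  simp [and_comm]

theorem Nat.cast_choose_div_cast_choose {N j ℓ : ℕ} (hℓj : ℓ ≤ j) (hℓN : ℓ ≤ N) :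
    ((N - ℓ).choose (j - ℓ) : ℝ) / j.choose ℓ = N.choose j / N.choose ℓ := by
  have hj : (j.choose ℓ : ℝ) ≠ 0 := by exact_mod_cast (Nat.choose_pos hℓj).ne'
  have hN : (N.choose ℓ : ℝ) ≠ 0 := by exact_mod_cast (Nat.choose_pos hℓN).ne'
  rw [div_eq_div_iff hj hN, mul_comm]
  exact_mod_cast (Nat.choose_mul hℓj).symm

theorem sum_hitProbFormula (A : Finset α) (w : ℕ) :
    ∑ S, hitProbFormula A S w
      = (∑ j ∈ Ico #A (#A + w), ((Fintype.card α).choose j : ℝ))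
          / (#A * (Fintype.card α).choose #A) := by
  have hA : #A ≤ Fintype.card α := card_le_univ A
  have hfiber : ∀ j ∈ Ico #A (#A + w),
      ∑ S ∈ {S : Finset α | A ⊆ S ∧ #S < #A + w} with #S = j, ((#A : ℝ) * (#S).choose #A)⁻¹
        = ((Fintype.card α).choose j : ℝ) / (#A * (Fintype.card α).choose #A) := by
    intro j hj
    rw [mem_Ico] at hj
    have hF : filter (fun S => #S = j) {S : Finset α | A ⊆ S ∧ #S < #A + w}
        = ({S : Finset α | A ⊆ S ∧ #S = j} : Finset (Finset α)) := by
      ext S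
      simp only [mem_filter, mem_univ, true_and]
      constructor
      · rintro ⟨⟨hAS, -⟩, hS⟩; exact ⟨hAS, hS⟩
      · rintro ⟨hAS, rfl⟩; exact ⟨⟨hAS, hj.2⟩, rfl⟩
    rw [sum_congr rfl fun S hS => by rw [(mem_filter.mp hS).2], sum_const, hF,
      card_filter_subset_card_eq A hj.1, nsmul_eq_mul]
    calc _ = ((Fintype.card α - #A).choose (j - #A) : ℝ) / j.choose #A / #A := by ring
      _ = _ := by rw [Nat.cast_choose_div_cast_choose hj.1 hA]; ring
  have hmaps : ∀ S ∈ ({S : Finset α | A ⊆ S ∧ #S < #A + w} : Finset _),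
      #S ∈ Ico #A (#A + w) := by
    intro S hS
    obtain ⟨hAS, hlt⟩ := (mem_filter.mp hS).2
    exact mem_Ico.mpr ⟨card_le_card hAS, hlt⟩
  simp only [hitProbFormula]
  rw [← sum_filter, ← sum_fiberwise_of_maps_to hmaps, sum_congr rfl hfiber, sum_div]

end Counting

section Walk

variable {α : Type*} [Fintype α]

def ones (v : α → Bool) : Finset α := {i | v i = true}

theorem ones_bijective : Function.Bijective (ones : (α → Bool) → Finset α) := by
  classical
  refine ⟨fun v v' h => funext fun i => ?_,
    fun S => ⟨fun i => decide (i ∈ S), by ext; simp [ones]⟩⟩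
  have := congrArg (i ∈ ·) h
  simp only [ones, mem_filter, mem_univ, true_and, eq_iff_iff] at this
  exact Bool.eq_iff_iff.mpr this

theorem ones_update_false [DecidableEq α] (v : α → Bool) (i : α) :
    ones (Function.update v i false) = (ones v).erase i := by
  ext j
  rcases eq_or_ne j i with rfl | h <;> simp [ones, Function.update_apply, *]

variable {n : ℕ} {v1 v2 : Fin n → Bool}

theorem hitProb_succ (w : ℕ) (v : Fin n → Bool) :
    hitProb n v1 v2 (w + 1) v = (#(ones v) : ℝ)⁻¹ * ∑ i ∈ ones v,
      if v = v1 ∧ Function.update v i false = v2 then 1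
      else hitProb n v1 v2 w (Function.update v i false) := by
  rw [hitProb]
  split_ifs with h
  · change #(ones v) = 0 at h
    rw [card_eq_zero.mp h, sum_empty, mul_zero]
  · rw [one_div]
    rfl

theorem hitProb_eq_hitProbFormula {i : Fin n} (hi : v1 i = true)
    (hv2 : v2 = Function.update v1 i false) (w : ℕ) (v : Fin n → Bool) :
    hitProb n v1 v2 w v = hitProbFormula (ones v1) (ones v) w := by
  induction w generalizing v with
  | zero =>
    rw [hitProb, hitProbFormula, if_neg]
    rintro ⟨hsub, hlt⟩
    exact absurd (card_le_card hsub) (by omega)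
  | succ w ih =>
    rw [hitProb_succ]
    by_cases hv : v = v1
    · subst hv
      have hi' : i ∈ ones v := by simpa [ones] using hi
      have hsum : ∑ j ∈ ones v, (if v = v ∧ Function.update v j false = v2 then (1 : ℝ)
          else hitProb n v v2 w (Function.update v j false)) = 1 := by
        rw [sum_eq_single_of_mem i hi' fun j hj hji => ?_, if_pos ⟨rfl, hv2.symm⟩]
        rw [if_neg, ih, ones_update_false]
        · exact hitProbFormula_eq_zero_of_not_subset (fun h => notMem_erase j _ (h hj)) w
        · rintro ⟨-, h⟩
          have := congrFun (h.trans hv2) i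
          simp [hji.symm, hi] at this
      rw [hsum, mul_one, hitProbFormula_self]
    · simp only [hv, false_and, if_false, ih, ones_update_false]
      by_cases hsub : ones v1 ⊆ ones v
      · exact hitProbFormula_succ_of_ssubset
          (ssubset_of_subset_of_ne hsub fun h => hv (ones_bijective.1 h).symm) w
      · rw [hitProbFormula_eq_zero_of_not_subset hsub, sum_eq_zero, mul_zero]
        exact fun j _ => hitProbFormula_eq_zero_of_not_subset
          (fun h => hsub (h.trans (erase_subset _ _))) w

end Walk

theorem descending_walk_edge_probability_general (n w : ℕ)
    (v1 v2 : Fin n → Bool) (ℓ : ℕ)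
    (hedge : ∃ i, v1 i = true ∧ v2 = Function.update v1 i false)
    (hlev : level v1 = ℓ) :
    (1 / 2 ^ n) * ∑ x : Fin n → Bool, hitProb n v1 v2 w x
      = (∑ j ∈ Finset.Ico ℓ (ℓ + w), (n.choose j : ℝ)) /
          (2 ^ n * (ℓ : ℝ) * (n.choose ℓ : ℝ)) := by
  obtain ⟨i, hi, hv2⟩ := hedge
  obtain rfl : #(ones v1) = ℓ := hlev
  rw [Fintype.sum_bijective ones ones_bijective _ (fun S => hitProbFormula (ones v1) S w)
      (hitProb_eq_hitProbFormula hi hv2 w),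
    sum_hitProbFormula, Fintype.card_fin]
  ring

/-- Let `n, w ≥ 1`, let `e = (v1, v2)` be a hypercube edge with `v2 ≺ v1` and
`L(v1) = ℓ ≥ 1`.  The probability that the random descending walk of length `w`
started at a uniformly random point of `{0,1}^n` traverses `e` equals
`(Σ_{j=ℓ}^{ℓ+w−1} C(n,j)) / (2^n · ℓ · C(n,ℓ))` (with `C(n,j) = 0` for `j > n`). -/
theorem descending_walk_edge_probability (n w : ℕ) (hn : 1 ≤ n) (hw : 1 ≤ w)
    (v1 v2 : Fin n → Bool) (ℓ : ℕ)
    (hedge : ∃ i, v1 i = true ∧ v2 = Function.update v1 i false)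
    (hlev : level v1 = ℓ) (hℓ : 1 ≤ ℓ) :
    (1 / 2 ^ n) * ∑ x : Fin n → Bool, hitProb n v1 v2 w x
      = (∑ j ∈ Finset.Ico ℓ (ℓ + w), (n.choose j : ℝ)) /
          (2 ^ n * (ℓ : ℝ) * (n.choose ℓ : ℝ)) :=
  descending_walk_edge_probability_general n w v1 v2 ℓ hedge hlev
end
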